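/- arXiv:2304.09127 — 2 statements merged into one kernel-verified Lean document; each statement's English description precedes it below -/
import Mathlib

section
/- Consider the branching annihilating random walk η on ℤ^d with parameters μ, R such that μ̃ := μ e^{-μ V_R^{-d}} < 1, constructed via η_{n+1}(x) = 1{U(x,n+1) ≤ φ_μ(δ_R(x;η_n))} with i.i.d. uniform U's. Then E[η_n(x)] ≤ μ̃^n for all x ∈ ℤ^d and n ∈ ℕ, and consequently almost surely η_n(x) = 0 for all sufficiently large n (local extinction). -/
open MeasureTheory ProbabilityTheory

/-- `d`-dimensional local density `δ_R(x;η) = V_R^{-d} Σ_{y ∈ B_R(x)} η(y)`. -/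
noncomputable def dens (d R : ℕ) (η : (Fin d → ℤ) → ℝ) (x : Fin d → ℤ) : ℝ :=
  ((2 * R + 1 : ℝ) ^ d)⁻¹ *
    ∑ y ∈ Finset.Icc (fun i => x i - (R : ℤ)) (fun i => x i + (R : ℤ)), η y

/-- `φ_μ(w) = μ w e^{-μ w}`. -/
noncomputable def phi (μ w : ℝ) : ℝ := μ * w * Real.exp (-(μ * w))

lemma aux_prob {Ω : Type*} [MeasureSpace Ω] [IsProbabilityMeasure (ℙ : Measure Ω)]
    (X Y : Ω → ℝ) (hX : Measurable X) (hY : Measurable Y)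
    (hunif : Measure.map X ℙ = volume.restrict (Set.Icc (0:ℝ) 1))
    (hind : IndepFun Y X ℙ)
    (hY1 : ∀ ω, Y ω ≤ 1) :
    ℙ {ω | X ω ≤ Y ω} = ∫⁻ ω, ENNReal.ofReal (Y ω) ∂ℙ := by
  have hs : MeasurableSet {p : ℝ × ℝ | p.2 ≤ p.1} :=
    measurableSet_le measurable_snd measurable_fst
  have hmap : Measure.map (fun ω => (Y ω, X ω)) ℙ = (Measure.map Y ℙ).prod (Measure.map X ℙ) :=
    (indepFun_iff_map_prod_eq_prod_map_map hY.aemeasurable hX.aemeasurable).1 hind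
  have h1 : {ω | X ω ≤ Y ω} = (fun ω => (Y ω, X ω)) ⁻¹' {p : ℝ × ℝ | p.2 ≤ p.1} := rfl
  rw [h1, ← Measure.map_apply (hY.prodMk hX) hs, hmap, hunif, Measure.prod_apply hs]
  have hpre : ∀ y : ℝ, (Prod.mk y ⁻¹' {p : ℝ × ℝ | p.2 ≤ p.1}) = Set.Iic y := fun y => rfl
  simp only [hpre]
  have hmono : Monotone (fun y : ℝ => (volume.restrict (Set.Icc (0:ℝ) 1)) (Set.Iic y)) :=
    fun a b hab => measure_mono (Set.Iic_subset_Iic.2 hab)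
  rw [lintegral_map hmono.measurable hY]
  refine lintegral_congr fun ω => ?_
  rw [Measure.restrict_apply measurableSet_Iic]
  have : Set.Iic (Y ω) ∩ Set.Icc (0:ℝ) 1 = Set.Icc 0 (Y ω) := by
    ext t
    simp only [Set.mem_inter_iff, Set.mem_Iic, Set.mem_Icc]
    constructor
    · rintro ⟨h1, h2, h3⟩; exact ⟨h2, h1⟩
    · rintro ⟨h1, h2⟩; exact ⟨h2, h1, h2.trans (hY1 ω)⟩
  rw [this, Real.volume_Icc, sub_zero]


/-- Extinction: for the BARW `η_{n+1}(x) = 1{U(x,n+1) ≤ φ_μ(δ_R(x;η_n))}` driven by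
i.i.d. uniform-`[0,1]` variables `U`, if `μ̃ := μ e^{-μ V_R^{-d}} < 1`, then
`E[η_n(x)] ≤ μ̃^n` for all `x`, `n`, and almost surely each site is eventually
vacant forever (local extinction). -/
theorem stmt16 {Ω : Type*} [MeasureSpace Ω] [IsProbabilityMeasure (ℙ : Measure Ω)]
    (d R : ℕ) (μ : ℝ) (hμ : 0 < μ)
    (hsub : μ * Real.exp (-(μ / (2 * R + 1 : ℝ) ^ d)) < 1)
    (U : (Fin d → ℤ) × ℕ → Ω → ℝ)
    (hUmeas : ∀ p, Measurable (U p))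
    (hUunif : ∀ p, Measure.map (U p) ℙ = volume.restrict (Set.Icc (0 : ℝ) 1))
    (hUind : iIndepFun U ℙ)
    (η0 : (Fin d → ℤ) → ℝ) (hη0 : ∀ x, η0 x = 0 ∨ η0 x = 1)
    (η : ℕ → (Fin d → ℤ) → Ω → ℝ)
    (hinit : ∀ x ω, η 0 x ω = η0 x)
    (hrec : ∀ n x ω, η (n + 1) x ω =
      if U (x, n + 1) ω ≤ phi μ (dens d R (fun y => η n y ω) x) then 1 else 0) :
    (∀ n x, (∫ ω, η n x ω) ≤ (μ * Real.exp (-(μ / (2 * R + 1 : ℝ) ^ d))) ^ n) ∧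
    ∀ x, ∀ᵐ ω ∂(ℙ : Measure Ω), ∃ N : ℕ, ∀ n, N ≤ n → η n x ω = 0 := by
  classical
  set ν : ℝ := μ * Real.exp (-(μ / (2 * R + 1 : ℝ) ^ d)) with hνdef
  set V : ℝ := (2 * R + 1 : ℝ) ^ d with hVdef
  have hVpos : 0 < V := by positivity
  have hν0 : 0 ≤ ν := mul_nonneg hμ.le (Real.exp_nonneg _)
  -- values are 0 or 1
  have vals : ∀ n x ω, η n x ω = 0 ∨ η n x ω = 1 := by
    intro n
    induction n with
    | zero => intro x ω; rw [hinit]; exact hη0 x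
    | succ n ih =>
      intro x ω; rw [hrec]; split
      · exact Or.inr rfl
      · exact Or.inl rfl
  -- cardinality of the ball
  have hcard : ∀ x : Fin d → ℤ,
      (Finset.Icc (fun i => x i - (R:ℤ)) (fun i => x i + (R:ℤ))).card = (2*R+1)^d := by
    intro x
    rw [Pi.card_Icc]
    have h : ∀ i : Fin d, (Finset.Icc (x i - (R:ℤ)) (x i + (R:ℤ))).card = 2*R+1 := by
      intro i
      rw [Int.card_Icc]
      have : x i + (R:ℤ) + 1 - (x i - (R:ℤ)) = ((2*R+1 : ℕ) : ℤ) := by push_cast; ring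
      rw [this, Int.toNat_natCast]
    simp [h, Finset.prod_const]
  -- density facts
  have hdens0 : ∀ n x ω, 0 ≤ dens d R (fun y => η n y ω) x := by
    intro n x ω
    refine mul_nonneg (by positivity) (Finset.sum_nonneg fun y _ => ?_)
    rcases vals n y ω with h | h <;> simp [h]
  have hdens_cases : ∀ n x ω, dens d R (fun y => η n y ω) x = 0 ∨
      V⁻¹ ≤ dens d R (fun y => η n y ω) x := by
    intro n x ω
    by_cases hz : ∀ y ∈ Finset.Icc (fun i => x i - (R:ℤ)) (fun i => x i + (R:ℤ)),
        η n y ω = 0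
    · left; unfold dens; rw [Finset.sum_eq_zero hz, mul_zero]
    · right
      push_neg at hz
      obtain ⟨y0, hy0mem, hy0⟩ := hz
      have hy1 : η n y0 ω = 1 := (vals n y0 ω).resolve_left hy0
      have hsum : (1:ℝ) ≤ ∑ y ∈ Finset.Icc (fun i => x i - (R:ℤ)) (fun i => x i + (R:ℤ)),
          η n y ω := by
        calc (1:ℝ) = η n y0 ω := hy1.symm
        _ ≤ _ := Finset.single_le_sum (f := fun y => η n y ω) (fun z _ => by
            rcases vals n z ω with h | h <;> simp [h]) hy0mem
      unfold dens
      calc V⁻¹ = V⁻¹ * 1 := (mul_one _).symm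
      _ ≤ _ := by
        refine mul_le_mul_of_nonneg_left hsum (by positivity)
  have hdens_le : ∀ n x ω, dens d R (fun y => η n y ω) x ≤ 1 := by
    intro n x ω
    unfold dens
    rw [← hVdef, inv_mul_le_iff₀ hVpos, mul_one]
    calc ∑ y ∈ Finset.Icc (fun i => x i - (R:ℤ)) (fun i => x i + (R:ℤ)), η n y ω
        ≤ ∑ y ∈ Finset.Icc (fun i => x i - (R:ℤ)) (fun i => x i + (R:ℤ)), 1 := by
          refine Finset.sum_le_sum fun y _ => ?_
          rcases vals n y ω with h | h <;> simp [h]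
      _ = ((2*R+1)^d : ℕ) := by rw [Finset.sum_const, hcard x]; simp
      _ = V := by rw [hVdef]; push_cast; ring
  -- phi bounds
  have hphi_nonneg : ∀ w : ℝ, 0 ≤ w → 0 ≤ phi μ w := fun w hw => by
    unfold phi; positivity
  have hphi_le_one : ∀ w : ℝ, 0 ≤ w → phi μ w ≤ 1 := by
    intro w hw
    unfold phi
    have h1 : μ * w ≤ Real.exp (μ * w) :=
      le_trans (by linarith) (Real.add_one_le_exp (μ * w))
    have h2 : Real.exp (μ * w) * Real.exp (-(μ * w)) = 1 := by
      rw [← Real.exp_add, add_neg_cancel, Real.exp_zero]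
    calc μ * w * Real.exp (-(μ * w)) ≤ Real.exp (μ * w) * Real.exp (-(μ * w)) :=
          mul_le_mul_of_nonneg_right h1 (Real.exp_nonneg _)
      _ = 1 := h2
  have hphi_lin : ∀ w : ℝ, (w = 0 ∨ V⁻¹ ≤ w) → phi μ w ≤ ν * w := by
    intro w hw
    rcases hw with h | h
    · simp [h, phi]
    · have hw0 : 0 ≤ w := le_trans (by positivity) h
      unfold phi
      have : Real.exp (-(μ * w)) ≤ Real.exp (-(μ / V)) := by
        apply Real.exp_le_exp.2
        rw [neg_le_neg_iff, div_le_iff₀ hVpos]  -- μ/V ≤ μ*w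
        have h1V : (1:ℝ) ≤ w * V := by
          calc (1:ℝ) = V⁻¹ * V := (inv_mul_cancel₀ hVpos.ne').symm
          _ ≤ w * V := mul_le_mul_of_nonneg_right h hVpos.le
        calc μ = μ * 1 := (mul_one μ).symm
        _ ≤ μ * (w * V) := mul_le_mul_of_nonneg_left h1V hμ.le
        _ = μ * w * V := (mul_assoc μ w V).symm
      calc μ * w * Real.exp (-(μ * w)) ≤ μ * w * Real.exp (-(μ / V)) :=
            mul_le_mul_of_nonneg_left this (by positivity)
        _ = ν * w := by rw [hνdef, hVdef]; ring
  -- filtration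
  let F : ℕ → MeasurableSpace Ω := fun n =>
    ⨆ p ∈ {p : (Fin d → ℤ) × ℕ | p.2 ≤ n}, MeasurableSpace.comap (U p) inferInstance
  have hFle : ∀ n, F n ≤ (inferInstance : MeasurableSpace Ω) :=
    fun n => iSup₂_le fun p _ => measurable_iff_comap_le.1 (hUmeas p)
  have hFmono : ∀ {n m : ℕ}, n ≤ m → F n ≤ F m := by
    intro n m hnm
    exact biSup_mono fun p hp => le_trans hp hnm
  have hphim : Measurable (phi μ) := by unfold phi; fun_prop
  have hdensF : ∀ n, (∀ y, Measurable[F n] (fun ω => η n y ω)) → ∀ x,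
      Measurable[F n] (fun ω => dens d R (fun y => η n y ω) x) := by
    intro n hn x
    unfold dens
    exact (Finset.measurable_sum _ (fun y _ => hn y)).const_mul _
  have hmeasF : ∀ n x, Measurable[F n] (fun ω => η n x ω) := by
    intro n
    induction n with
    | zero =>
      intro x
      have h : (fun ω => η 0 x ω) = fun _ => η0 x := funext fun ω => hinit x ω
      rw [h]; exact measurable_const
    | succ n ih =>
      intro x
      have hY : Measurable[F n] (fun ω => phi μ (dens d R (fun y => η n y ω) x)) :=
        hphim.comp (hdensF n ih x)
      have hYle : Measurable[F (n+1)] (fun ω => phi μ (dens d R (fun y => η n y ω) x)) :=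
        hY.mono (hFmono (Nat.le_succ n)) le_rfl
      have hU' : Measurable[F (n+1)] (U (x, n+1)) := by
        refine measurable_iff_comap_le.2 ?_
        exact le_biSup (fun p : (Fin d → ℤ) × ℕ => MeasurableSpace.comap (U p) inferInstance)
          (show ((x, n+1) : (Fin d → ℤ) × ℕ) ∈
            {p : (Fin d → ℤ) × ℕ | p.2 ≤ n+1} from by simp)
      have hset : MeasurableSet[F (n+1)]
          {ω | U (x, n+1) ω ≤ phi μ (dens d R (fun y => η n y ω) x)} :=
        measurableSet_le hU' hYle
      have h : (fun ω => η (n+1) x ω) = fun ω =>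
          if U (x, n+1) ω ≤ phi μ (dens d R (fun y => η n y ω) x) then (1:ℝ) else 0 :=
        funext fun ω => hrec n x ω
      rw [h]
      exact Measurable.ite hset measurable_const measurable_const
  have hmeas : ∀ n x, Measurable (fun ω => η n x ω) :=
    fun n x => (hmeasF n x).mono (hFle n) le_rfl
  -- independence
  have hind : ∀ n x, IndepFun (fun ω => phi μ (dens d R (fun y => η n y ω) x))
      (U (x, n+1)) ℙ := by
    intro n x
    rw [IndepFun_iff_Indep]
    have hbase := indep_biSup_compl (fun p => measurable_iff_comap_le.1 (hUmeas p))
        hUind.iIndep {p : (Fin d → ℤ) × ℕ | p.2 ≤ n}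
    refine indep_of_indep_of_le_right (indep_of_indep_of_le_left hbase ?_) ?_
    · exact measurable_iff_comap_le.1 (hphim.comp (hdensF n (fun y => hmeasF n y) x))
    · exact le_biSup (fun p : (Fin d → ℤ) × ℕ => MeasurableSpace.comap (U p) inferInstance)
        (show ((x, n+1) : (Fin d → ℤ) × ℕ) ∈
          {p : (Fin d → ℤ) × ℕ | p.2 ≤ n}ᶜ from by simp)
  -- key expectation identity
  have hkey : ∀ n x, ∫ ω, η (n+1) x ω =
      ∫ ω, phi μ (dens d R (fun y => η n y ω) x) := by
    intro n x
    set Y : Ω → ℝ := fun ω => phi μ (dens d R (fun y => η n y ω) x) with hYdef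
    have hYm : Measurable Y :=
      hphim.comp ((hdensF n (fun y => hmeasF n y) x).mono (hFle n) le_rfl)
    have hY0 : ∀ ω, 0 ≤ Y ω := fun ω => hphi_nonneg _ (hdens0 n x ω)
    have hY1 : ∀ ω, Y ω ≤ 1 := fun ω => hphi_le_one _ (hdens0 n x ω)
    have hsetm : MeasurableSet {ω | U (x, n+1) ω ≤ Y ω} :=
      measurableSet_le (hUmeas _) hYm
    have h1 : (fun ω => η (n+1) x ω) =
        Set.indicator {ω | U (x, n+1) ω ≤ Y ω} (1 : Ω → ℝ) := by
      funext ω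
      rw [hrec]
      by_cases h : U (x, n+1) ω ≤ Y ω
      · simp [Set.indicator_apply, h, show U (x, n+1) ω ≤ phi μ (dens d R (fun y => η n y ω) x) from h]
      · simp [Set.indicator_apply, h, show ¬ U (x, n+1) ω ≤ phi μ (dens d R (fun y => η n y ω) x) from h]
    calc ∫ ω, η (n+1) x ω
        = ∫ ω, Set.indicator {ω | U (x, n+1) ω ≤ Y ω} (1 : Ω → ℝ) ω := by rw [h1]
      _ = (ℙ {ω | U (x, n+1) ω ≤ Y ω}).toReal := integral_indicator_one hsetm
      _ = (∫⁻ ω, ENNReal.ofReal (Y ω) ∂ℙ).toReal := by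
          rw [aux_prob (U (x, n+1)) Y (hUmeas _) hYm (hUunif _) (hind n x) hY1]
      _ = ∫ ω, Y ω := by
          rw [integral_eq_lintegral_of_nonneg_ae (ae_of_all _ hY0)
            hYm.aestronglyMeasurable]
  -- integrability
  have hint : ∀ n x, Integrable (fun ω => η n x ω) ℙ := by
    intro n x
    refine Integrable.mono' (integrable_const (1:ℝ)) (hmeas n x).aestronglyMeasurable
      (ae_of_all _ fun ω => ?_)
    rcases vals n x ω with h | h <;> simp [h]
  have hintd : ∀ n x, Integrable (fun ω => dens d R (fun y => η n y ω) x) ℙ := by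
    intro n x
    unfold dens
    exact ((integrable_finset_sum _ (fun y _ => hint n y)).const_mul _)
  -- expectation bound
  have hcast : (((2*R+1)^d : ℕ) : ℝ) = V := by rw [hVdef]; push_cast; ring
  have hmain : ∀ n x, (∫ ω, η n x ω) ≤ ν ^ n := by
    intro n
    induction n with
    | zero =>
      intro x
      simp only [hinit, pow_zero]
      rw [integral_const]
      simp only [measure_univ, ENNReal.toReal_one, smul_eq_mul, one_mul]
      rcases hη0 x with h | h <;> simp [h]
    | succ n ih =>
      intro x
      rw [hkey n x]
      have hYm : Measurable (fun ω => phi μ (dens d R (fun y => η n y ω) x)) :=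
        hphim.comp ((hdensF n (fun y => hmeasF n y) x).mono (hFle n) le_rfl)
      have step1 : (∫ ω, phi μ (dens d R (fun y => η n y ω) x)) ≤
          ∫ ω, ν * dens d R (fun y => η n y ω) x := by
        refine integral_mono ?_ ((hintd n x).const_mul ν) fun ω => ?_
        · refine Integrable.mono' (integrable_const (1:ℝ)) hYm.aestronglyMeasurable
            (ae_of_all _ fun ω => ?_)
          rw [Real.norm_eq_abs, abs_of_nonneg (hphi_nonneg _ (hdens0 n x ω))]
          exact hphi_le_one _ (hdens0 n x ω)
        · exact hphi_lin _ (hdens_cases n x ω)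
      have step2 : (∫ ω, ν * dens d R (fun y => η n y ω) x) =
          ν * (V⁻¹ * ∑ y ∈ Finset.Icc (fun i => x i - (R:ℤ)) (fun i => x i + (R:ℤ)),
            ∫ ω, η n y ω) := by
        rw [integral_const_mul]
        congr 1
        unfold dens
        rw [integral_const_mul, integral_finset_sum _ (fun y _ => hint n y), ← hVdef]
      have step3 : (∑ y ∈ Finset.Icc (fun i => x i - (R:ℤ)) (fun i => x i + (R:ℤ)),
          ∫ ω, η n y ω) ≤ V * ν ^ n := by
        calc (∑ y ∈ Finset.Icc (fun i => x i - (R:ℤ)) (fun i => x i + (R:ℤ)),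
            ∫ ω, η n y ω)
            ≤ ∑ _y ∈ Finset.Icc (fun i => x i - (R:ℤ)) (fun i => x i + (R:ℤ)), ν ^ n :=
              Finset.sum_le_sum fun y _ => ih y
          _ = (((2*R+1)^d : ℕ) : ℝ) * ν ^ n := by
              rw [Finset.sum_const, hcard x, nsmul_eq_mul]
          _ = V * ν ^ n := by rw [hcast]
      calc (∫ ω, phi μ (dens d R (fun y => η n y ω) x))
          ≤ ∫ ω, ν * dens d R (fun y => η n y ω) x := step1
        _ = ν * (V⁻¹ * ∑ y ∈ Finset.Icc (fun i => x i - (R:ℤ))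
            (fun i => x i + (R:ℤ)), ∫ ω, η n y ω) := step2
        _ ≤ ν * (V⁻¹ * (V * ν ^ n)) := by
            refine mul_le_mul_of_nonneg_left (mul_le_mul_of_nonneg_left step3 ?_) hν0
            positivity
        _ = ν ^ (n+1) := by
            rw [inv_mul_cancel_left₀ hVpos.ne', pow_succ]
            ring
  refine ⟨hmain, ?_⟩
  -- Borel-Cantelli
  intro x
  set s : ℕ → Set Ω := fun n => {ω | η n x ω = 1} with hsdef
  have hsm : ∀ n, MeasurableSet (s n) := fun n => (hmeas n x) (measurableSet_singleton 1)
  have hsb : ∀ n, ℙ (s n) ≤ ENNReal.ofReal (ν ^ n) := by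
    intro n
    have hi : (fun ω => η n x ω) = Set.indicator (s n) (1 : Ω → ℝ) := by
      funext ω
      by_cases h : η n x ω = 1
      · simp [hsdef, Set.indicator_apply, h]
      · simp [hsdef, Set.indicator_apply, h, (vals n x ω).resolve_right h]
    have ht : (ℙ (s n)).toReal ≤ ν ^ n := by
      have h2 := hmain n x
      rw [hi, integral_indicator_one (hsm n)] at h2
      exact h2
    exact (ENNReal.le_ofReal_iff_toReal_le (measure_ne_top _ _) (pow_nonneg hν0 n)).2 ht
  have hsum : (∑' n, ℙ (s n)) ≠ ⊤ := by
    refine ne_top_of_le_ne_top ?_ (ENNReal.tsum_le_tsum hsb)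
    rw [← ENNReal.ofReal_tsum_of_nonneg (fun n => pow_nonneg hν0 n)
      (summable_geometric_of_lt_one hν0 hsub)]
    exact ENNReal.ofReal_ne_top
  filter_upwards [MeasureTheory.ae_eventually_notMem hsum] with ω hω
  rw [Filter.eventually_atTop] at hω
  obtain ⟨N, hN⟩ := hω
  exact ⟨N, fun n hn => (vals n x ω).resolve_right (hN n hn)⟩
end

section
/- Let μ ∈ (1, e²) and let Ξ be the coupled map lattice Ξ_{n+1}(x) = φ_μ(δ_R(x;Ξ_n)) with initial condition Ξ₀ ∈ [0,1/e]^{ℤ^d} satisfying Ξ₀(0) > 0. Then for every z ∈ ℤ^d, Ξ_n(z) → θ_μ as n → ∞, where θ_μ = ln(μ)/μ is the attractive fixpoint of φ_μ. -/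
open Real

section Phi
variable {μ : ℝ}

lemma phi_nonneg (hμ : 0 < μ) {w : ℝ} (hw : 0 ≤ w) : 0 ≤ phi μ w := by
  unfold phi; positivity

lemma phi_pos (hμ : 0 < μ) {w : ℝ} (hw : 0 < w) : 0 < phi μ w := by
  unfold phi; positivity

lemma mul_exp_neg_le (t : ℝ) : t * Real.exp (-t) ≤ (Real.exp 1)⁻¹ := by
  have h := Real.add_one_le_exp (t - 1)
  have ht : t ≤ Real.exp (t - 1) := by linarith
  have : t * Real.exp (-t) ≤ Real.exp (t - 1) * Real.exp (-t) :=
    mul_le_mul_of_nonneg_right ht (Real.exp_nonneg _)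
  calc t * Real.exp (-t) ≤ Real.exp (t - 1) * Real.exp (-t) := this
    _ = (Real.exp 1)⁻¹ := by
        rw [← Real.exp_add, ← Real.exp_neg]; ring_nf

lemma phi_le (μ w : ℝ) : phi μ w ≤ (Real.exp 1)⁻¹ := mul_exp_neg_le (μ * w)

lemma theta_pos (hμ1 : 1 < μ) : 0 < Real.log μ / μ := by
  have := Real.log_pos hμ1
  positivity

lemma theta_le (hμ1 : 1 < μ) : Real.log μ / μ ≤ (Real.exp 1)⁻¹ := by
  have hμ : (0:ℝ) < μ := by linarith
  rw [div_le_iff₀ hμ]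
  have h := Real.add_one_le_exp (Real.log μ - 1)
  have : Real.log μ ≤ Real.exp (Real.log μ - 1) := by linarith
  calc Real.log μ ≤ Real.exp (Real.log μ - 1) := this
    _ = (Real.exp 1)⁻¹ * μ := by
        rw [Real.exp_sub, Real.exp_log hμ]; field_simp
    _ = (Real.exp 1)⁻¹ * μ := rfl
  -- reorder
lemma theta_le' (hμ1 : 1 < μ) : Real.log μ / μ ≤ (Real.exp 1)⁻¹ := theta_le hμ1

lemma phi_theta (hμ1 : 1 < μ) : phi μ (Real.log μ / μ) = Real.log μ / μ := by
  have hμ : (0:ℝ) < μ := by linarith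
  unfold phi
  rw [mul_div_cancel₀ _ (ne_of_gt hμ)]
  rw [Real.exp_neg, Real.exp_log hμ]
  field_simp

lemma mul_exp_factor (hμ1 : 1 < μ) (x : ℝ) :
    μ * Real.exp (-(μ * x)) = Real.exp (Real.log μ - μ * x) := by
  rw [Real.exp_sub, Real.exp_log (by linarith : (0:ℝ) < μ), Real.exp_neg]
  field_simp

lemma phi_gt_self (hμ1 : 1 < μ) {x : ℝ} (hx0 : 0 < x) (hxθ : x < Real.log μ / μ) :
    x < phi μ x := by
  have hμ : (0:ℝ) < μ := by linarith
  have h1 : (1:ℝ) < μ * Real.exp (-(μ * x)) := by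
    rw [mul_exp_factor hμ1]
    rw [show (1:ℝ) = Real.exp 0 from (Real.exp_zero).symm]
    apply Real.exp_lt_exp.2
    have := (lt_div_iff₀ hμ).1 hxθ
    linarith
  have : phi μ x = x * (μ * Real.exp (-(μ * x))) := by unfold phi; ring
  rw [this]
  nlinarith

lemma phi_lt_self (hμ1 : 1 < μ) {x : ℝ} (hxθ : Real.log μ / μ < x) :
    phi μ x < x := by
  have hμ : (0:ℝ) < μ := by linarith
  have hx0 : 0 < x := lt_trans (theta_pos hμ1) hxθ
  have h1 : μ * Real.exp (-(μ * x)) < 1 := by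
    rw [mul_exp_factor hμ1]
    rw [show (1:ℝ) = Real.exp 0 from (Real.exp_zero).symm]
    apply Real.exp_lt_exp.2
    have := (div_lt_iff₀ hμ).1 hxθ
    nlinarith
  have : phi μ x = x * (μ * Real.exp (-(μ * x))) := by unfold phi; ring
  rw [this]
  nlinarith

lemma phi_fixed (hμ1 : 1 < μ) {x : ℝ} (hx0 : 0 < x) (hfix : phi μ x = x) :
    x = Real.log μ / μ := by
  have hμ : (0:ℝ) < μ := by linarith
  rcases lt_trichotomy x (Real.log μ / μ) with h | h | h
  · have h2 := phi_gt_self hμ1 hx0 h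
    rw [hfix] at h2; exact absurd h2 (lt_irrefl x)
  · exact h
  · have h2 := phi_lt_self hμ1 h
    rw [hfix] at h2; exact absurd h2 (lt_irrefl x)

lemma hasDerivAt_phi (μ w : ℝ) :
    HasDerivAt (phi μ) (μ * Real.exp (-(μ * w)) * (1 - μ * w)) w := by
  have h1 : HasDerivAt (fun w : ℝ => μ * w) μ w := by
    simpa using (hasDerivAt_id w).const_mul μ
  have h0 : HasDerivAt (fun w : ℝ => -(μ * w)) (-μ) w := h1.neg
  have h2 : HasDerivAt (fun w : ℝ => Real.exp (-(μ * w)))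
      (Real.exp (-(μ * w)) * (-μ)) w := (Real.hasDerivAt_exp _).comp w h0
  have := h1.mul h2
  refine this.congr_deriv ?_
  ring

lemma continuous_phi (μ : ℝ) : Continuous (phi μ) := by
  unfold phi; continuity

lemma phi_monoOn (hμ1 : 1 < μ) : MonotoneOn (phi μ) (Set.Icc 0 μ⁻¹) := by
  have hμ : (0:ℝ) < μ := by linarith
  apply monotoneOn_of_deriv_nonneg (convex_Icc _ _) (continuous_phi μ).continuousOn
  · intro x hx
    exact (hasDerivAt_phi μ x).differentiableAt.differentiableWithinAt
  · intro x hx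
    rw [interior_Icc] at hx
    rw [(hasDerivAt_phi μ x).deriv]
    have : μ * x < 1 := by
      have := hx.2
      calc μ * x < μ * μ⁻¹ := by nlinarith [hx.1]
        _ = 1 := mul_inv_cancel₀ (ne_of_gt hμ)
    have h2 : (0:ℝ) < Real.exp (-(μ * x)) := Real.exp_pos _
    apply mul_nonneg (by positivity) (by linarith)

lemma phi_antiOn (hμ1 : 1 < μ) : AntitoneOn (phi μ) (Set.Ici μ⁻¹) := by
  have hμ : (0:ℝ) < μ := by linarith
  apply antitoneOn_of_deriv_nonpos (convex_Ici _) (continuous_phi μ).continuousOn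
  · intro x hx
    exact (hasDerivAt_phi μ x).differentiableAt.differentiableWithinAt
  · intro x hx
    rw [interior_Ici] at hx
    rw [(hasDerivAt_phi μ x).deriv]
    have : 1 < μ * x := by
      have : μ⁻¹ < x := hx
      calc 1 = μ * μ⁻¹ := (mul_inv_cancel₀ (ne_of_gt hμ)).symm
        _ < μ * x := by nlinarith
    have h2 : (0:ℝ) < Real.exp (-(μ * x)) := Real.exp_pos _
    exact mul_nonpos_iff.2 (Or.inl ⟨by positivity, by linarith⟩)

lemma phi_min_endpoints (hμ1 : 1 < μ) {u v x : ℝ} (hu : 0 ≤ u) (h1 : u ≤ x) (h2 : x ≤ v) :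
    min (phi μ u) (phi μ v) ≤ phi μ x := by
  rcases le_or_gt x μ⁻¹ with h | h
  · exact le_trans (min_le_left _ _)
      (phi_monoOn hμ1 ⟨hu, le_trans h1 h⟩ ⟨le_trans hu h1, h⟩ h1)
  · exact le_trans (min_le_right _ _)
      (phi_antiOn hμ1 (Set.mem_Ici.2 h.le) (Set.mem_Ici.2 (le_trans h.le h2)) h2)

end Phi

section Phi2
variable {μ : ℝ}

lemma hasDerivAt_H (r u : ℝ) :
    HasDerivAt (fun u => (r + u) * Real.exp (-u) + u - r)
      (1 - Real.exp (-u) * (r + u - 1)) u := by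
  have h1 : HasDerivAt (fun u : ℝ => r + u) 1 u := by
    simpa using (hasDerivAt_id u).const_add r
  have h0 : HasDerivAt (fun u : ℝ => -u) (-1) u := (hasDerivAt_id u).neg
  have h2 : HasDerivAt (fun u : ℝ => Real.exp (-u)) (Real.exp (-u) * (-1)) u :=
    (Real.hasDerivAt_exp _).comp u h0
  have h3 := h1.mul h2
  have h4 := (h3.add (hasDerivAt_id u)).sub_const r
  refine h4.congr_deriv ?_
  simp; ring

lemma H_strictMono {r : ℝ} (hr : r < 2) :
    StrictMono (fun u => (r + u) * Real.exp (-u) + u - r) := by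
  apply strictMono_of_deriv_pos
  intro u
  rw [(hasDerivAt_H r u).deriv]
  have he : (0:ℝ) < Real.exp (-u) := Real.exp_pos _
  rcases le_or_gt (r + u - 1) 0 with h | h
  · nlinarith
  · have h1 : u + 1 ≤ Real.exp u := by linarith [Real.add_one_le_exp u]
    have h2 : Real.exp (-u) * Real.exp u = 1 := by rw [← Real.exp_add]; simp
    have h3 : Real.exp (-u) * (u + 1) ≤ 1 := by
      calc Real.exp (-u) * (u + 1) ≤ Real.exp (-u) * Real.exp u :=
            mul_le_mul_of_nonneg_left h1 he.le
        _ = 1 := h2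
    have h4 : Real.exp (-u) * (r - 2) < 0 := mul_neg_of_pos_of_neg he (by linarith)
    nlinarith

lemma log_lt_two (hμ0 : 0 < μ) (hμ2 : μ < Real.exp 2) : Real.log μ < 2 := by
  by_contra hc
  push_neg at hc
  have : Real.exp 2 ≤ Real.exp (Real.log μ) := Real.exp_le_exp.2 hc
  rw [Real.exp_log hμ0] at this; linarith

lemma no_two_cycle (hμ1 : 1 < μ) (hμ2 : μ < Real.exp 2) {x : ℝ} (hx : 0 < x)
    (h : phi μ (phi μ x) = x) : x = Real.log μ / μ := by
  have hμ : (0:ℝ) < μ := by linarith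
  set r := Real.log μ with hr
  have hr2 : r < 2 := log_lt_two hμ hμ2
  have hexpr : Real.exp r = μ := Real.exp_log hμ
  have hphix : 0 < phi μ x := phi_pos hμ hx
  set t1 := μ * x with ht1
  set t2 := μ * phi μ x with ht2
  have ht1p : 0 < t1 := by positivity
  have ht2p : 0 < t2 := by positivity
  have key : ∀ y : ℝ, μ * phi μ y = (μ * y) * Real.exp (r - μ * y) := by
    intro y
    have hf := mul_exp_factor hμ1 y
    rw [← hr] at hf
    unfold phi
    rw [← hf]
    ring
  have e1 : t2 = t1 * Real.exp (r - t1) := by rw [ht2, key x]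
  have e2 : t1 = t2 * Real.exp (r - t2) := by
    rw [ht1, ← h, key (phi μ x)]
  have e3 : t1 * (Real.exp (r - t1) * Real.exp (r - t2)) = t1 * 1 := by
    rw [mul_one]
    calc t1 * (Real.exp (r - t1) * Real.exp (r - t2))
        = (t1 * Real.exp (r - t1)) * Real.exp (r - t2) := by ring
      _ = t2 * Real.exp (r - t2) := by rw [← e1]
      _ = t1 := by rw [← e2]
  have e4 : Real.exp ((r - t1) + (r - t2)) = 1 := by
    rw [Real.exp_add]
    exact mul_left_cancel₀ (ne_of_gt ht1p) e3
  have e5 : t2 = 2 * r - t1 := by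
    have := (Real.exp_eq_one_iff _).1 e4
    linarith
  -- now t1 * exp (r - t1) = 2r - t1
  have e6 : t1 * Real.exp (r - t1) = 2 * r - t1 := by rw [← e5, ← e1]
  -- H (t1 - r) = 0 = H 0
  have hH := H_strictMono (r := r) hr2
  have hH0 : (fun u => (r + u) * Real.exp (-u) + u - r) (t1 - r) =
      (fun u => (r + u) * Real.exp (-u) + u - r) 0 := by
    show (r + (t1 - r)) * Real.exp (-(t1 - r)) + (t1 - r) - r =
      (r + 0) * Real.exp (-0) + 0 - r
    calc (r + (t1 - r)) * Real.exp (-(t1 - r)) + (t1 - r) - r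
        = t1 * Real.exp (r - t1) + t1 - 2 * r := by
          rw [show -(t1 - r) = r - t1 by ring, show r + (t1 - r) = t1 by ring]; ring
      _ = (2 * r - t1) + t1 - 2 * r := by rw [e6]
      _ = (r + 0) * Real.exp (-0) + 0 - r := by
          rw [neg_zero, Real.exp_zero]; ring
  have : t1 - r = 0 := hH.injective hH0
  have ht1r : t1 = r := by linarith
  rw [ht1] at ht1r
  rw [eq_div_iff (ne_of_gt hμ)]
  linarith [ht1r]

lemma phi2_gt (hμ1 : 1 < μ) (hμ2 : μ < Real.exp 2) {x : ℝ} (hx0 : 0 < x)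
    (hxθ : x < Real.log μ / μ) : x < phi μ (phi μ x) := by
  have hμ : (0:ℝ) < μ := by linarith
  set θ := Real.log μ / μ with hθ
  have hθp : 0 < θ := theta_pos hμ1
  set x₀ := θ / (μ + 1) with hx₀
  have hx₀p : 0 < x₀ := by positivity
  have hx₀θ : x₀ < θ := by
    rw [hx₀, div_lt_iff₀ (by linarith)]
    nlinarith
  have hphix₀ : phi μ x₀ < θ := by
    have h1 : phi μ x₀ ≤ μ * x₀ := by
      unfold phi
      have hee : Real.exp (-(μ * x₀)) ≤ 1 := by
        rw [Real.exp_le_one_iff]; nlinarith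
      calc μ * x₀ * Real.exp (-(μ * x₀)) ≤ μ * x₀ * 1 :=
            mul_le_mul_of_nonneg_left hee (by positivity)
        _ = μ * x₀ := mul_one _
    have h2 : μ * x₀ < θ := by
      rw [hx₀, ← mul_div_assoc, div_lt_iff₀ (by linarith : (0:ℝ) < μ + 1)]
      nlinarith
    linarith
  have hG₀ : x₀ < phi μ (phi μ x₀) := by
    have h1 : x₀ < phi μ x₀ := phi_gt_self hμ1 hx₀p hx₀θ
    have h2 : phi μ x₀ < phi μ (phi μ x₀) :=
      phi_gt_self hμ1 (lt_trans hx₀p h1) hphix₀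
    linarith
  by_contra hc
  push_neg at hc
  rcases eq_or_lt_of_le hc with he | hlt
  · have hxeq := no_two_cycle hμ1 hμ2 hx0 he
    rw [← hθ] at hxeq
    rw [hxeq] at hxθ; exact absurd hxθ (lt_irrefl θ)
  · -- IVT on uIcc x₀ x
    set G := fun y => phi μ (phi μ y) - y with hG
    have hGc : ContinuousOn G (Set.uIcc x₀ x) := by
      apply Continuous.continuousOn
      exact ((continuous_phi μ).comp (continuous_phi μ)).sub continuous_id
    have h0mem : (0:ℝ) ∈ Set.uIcc (G x₀) (G x) := by
      rw [Set.mem_uIcc]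
      right
      constructor
      · simp only [hG]; linarith
      · simp only [hG]; linarith
    obtain ⟨c, hc1, hc2⟩ := intermediate_value_uIcc hGc h0mem
    have hcmem : c ∈ Set.uIcc x₀ x := hc1
    have hc0 : 0 < c := by
      rcases Set.mem_uIcc.1 hcmem with ⟨h1, _⟩ | ⟨h1, _⟩
      · linarith
      · linarith
    have hcθ : c < θ := by
      rcases Set.mem_uIcc.1 hcmem with ⟨_, h2⟩ | ⟨_, h2⟩
      · linarith
      · linarith
    have : phi μ (phi μ c) = c := by
      have : G c = 0 := hc2
      simp only [hG] at this; linarith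
    have hceq := no_two_cycle hμ1 hμ2 hc0 this
    rw [← hθ] at hceq
    rw [hceq] at hcθ; exact absurd hcθ (lt_irrefl θ)

lemma phi2_lt (hμ1 : 1 < μ) (hμ2 : μ < Real.exp 2) {x : ℝ}
    (hxθ : Real.log μ / μ < x) : phi μ (phi μ x) < x := by
  have hμ : (0:ℝ) < μ := by linarith
  set θ := Real.log μ / μ with hθ
  have hθp : 0 < θ := theta_pos hμ1
  have hx0 : 0 < x := lt_trans hθp hxθ
  have hθ1 : θ < 1 := lt_of_le_of_lt (theta_le hμ1) (by
    rw [inv_lt_one_iff₀]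
    right
    linarith [Real.exp_one_gt_d9])
  have hG₁ : phi μ (phi μ 1) < 1 := by
    calc phi μ (phi μ 1) ≤ (Real.exp 1)⁻¹ := phi_le μ _
      _ < 1 := by
        rw [inv_lt_one_iff₀]; right; linarith [Real.exp_one_gt_d9]
  by_contra hc
  push_neg at hc
  rcases eq_or_lt_of_le hc with he | hlt
  · have hxeq := no_two_cycle hμ1 hμ2 hx0 he.symm
    rw [← hθ] at hxeq
    rw [hxeq] at hxθ; exact absurd hxθ (lt_irrefl θ)
  · set G := fun y => phi μ (phi μ y) - y with hG
    have hGc : ContinuousOn G (Set.uIcc 1 x) := by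
      apply Continuous.continuousOn
      exact ((continuous_phi μ).comp (continuous_phi μ)).sub continuous_id
    have h0mem : (0:ℝ) ∈ Set.uIcc (G 1) (G x) := by
      rw [Set.mem_uIcc]
      left
      constructor
      · simp only [hG]; linarith
      · simp only [hG]; linarith
    obtain ⟨c, hc1, hc2⟩ := intermediate_value_uIcc hGc h0mem
    have hcθ : θ < c := by
      rcases Set.mem_uIcc.1 hc1 with ⟨h1, _⟩ | ⟨h1, _⟩
      · linarith
      · linarith
    have hc0 : 0 < c := lt_trans hθp hcθ
    have : phi μ (phi μ c) = c := by
      have : G c = 0 := hc2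
      simp only [hG] at this; linarith
    have hceq := no_two_cycle hμ1 hμ2 hc0 this
    rw [← hθ] at hceq
    rw [hceq] at hcθ; exact absurd hcθ (lt_irrefl θ)

end Phi2

section Phi3
variable {μ : ℝ}

/-- lower threshold constant -/
noncomputable def bconst (μ : ℝ) : ℝ :=
  min (min (phi μ (Real.log μ / μ / 2)) (phi μ (Real.exp 1)⁻¹)) (Real.log μ / μ)

lemma bconst_pos (hμ1 : 1 < μ) : 0 < bconst μ := by
  have hμ : (0:ℝ) < μ := by linarith
  have h1 : 0 < phi μ (Real.log μ / μ / 2) :=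
    phi_pos hμ (by have := theta_pos hμ1; linarith)
  have h2 : 0 < phi μ (Real.exp 1)⁻¹ := phi_pos hμ (by positivity)
  exact lt_min (lt_min h1 h2) (theta_pos hμ1)

lemma bconst_le_theta : bconst μ ≤ Real.log μ / μ := min_le_right _ _

lemma sqrt_eq_exp_half (hμ : 0 < μ) : Real.sqrt μ = Real.exp (Real.log μ / 2) := by
  rw [Real.sqrt_eq_rpow, Real.rpow_def_of_pos hμ]
  ring_nf

lemma one_lt_sqrt (hμ1 : 1 < μ) : 1 < Real.sqrt μ := by
  have : Real.sqrt 1 < Real.sqrt μ := Real.sqrt_lt_sqrt (by norm_num) hμ1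
  simpa using this

lemma phi_ge_min (hμ1 : 1 < μ) {w : ℝ} (hw0 : 0 ≤ w) (hw1 : w ≤ (Real.exp 1)⁻¹) :
    min (Real.sqrt μ * w) (bconst μ) ≤ phi μ w := by
  have hμ : (0:ℝ) < μ := by linarith
  rcases le_or_gt w (Real.log μ / μ / 2) with hc | hc
  · apply le_trans (min_le_left _ _)
    have hkey : Real.sqrt μ ≤ μ * Real.exp (-(μ * w)) := by
      rw [sqrt_eq_exp_half hμ, mul_exp_factor hμ1]
      apply Real.exp_le_exp.2
      have h2 : μ * w ≤ Real.log μ / 2 := by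
        have h3 := mul_le_mul_of_nonneg_left hc (le_of_lt hμ)
        have h4 : μ * (Real.log μ / μ / 2) = Real.log μ / 2 := by field_simp
        linarith [h4 ▸ h3]
      linarith
    calc Real.sqrt μ * w ≤ (μ * Real.exp (-(μ * w))) * w :=
          mul_le_mul_of_nonneg_right hkey hw0
      _ = phi μ w := by unfold phi; ring
  · apply le_trans (min_le_right _ _)
    apply le_trans (min_le_left _ _ : bconst μ ≤ _)
    exact phi_min_endpoints hμ1
      (le_of_lt (by have := theta_pos hμ1; positivity)) hc.le hw1

lemma phi_ge_slope (hμ1 : 1 < μ) {x : ℝ} (hx0 : 0 ≤ x) (hx1 : μ * x ≤ 1) :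
    μ * Real.exp (-1) * x ≤ phi μ x := by
  have hμ : (0:ℝ) < μ := by linarith
  have h1 : Real.exp (-1) ≤ Real.exp (-(μ * x)) := Real.exp_le_exp.2 (by linarith)
  unfold phi
  calc μ * Real.exp (-1) * x = (μ * x) * Real.exp (-1) := by ring
    _ ≤ (μ * x) * Real.exp (-(μ * x)) :=
        mul_le_mul_of_nonneg_left h1 (by positivity)
    _ = μ * x * Real.exp (-(μ * x)) := by ring

lemma hasDerivAt_F (u : ℝ) :
    HasDerivAt (fun u : ℝ => 1 + 2 * u - Real.exp u) (2 - Real.exp u) u := by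
  have h1 : HasDerivAt (fun u : ℝ => 1 + 2 * u) 2 u := by
    simpa using ((hasDerivAt_id u).const_mul 2).const_add 1
  have h2 := h1.sub (Real.hasDerivAt_exp u)
  exact h2

lemma aux_exp_lt {s : ℝ} (h0 : 0 < s) (h1 : s < 1) : Real.exp s < 1 + 2 * s := by
  set F := fun u : ℝ => 1 + 2 * u - Real.exp u with hF
  have hFc : Continuous F := by
    apply Continuous.sub
    · continuity
    · exact Real.continuous_exp
  have hlog2 : Real.log 2 < 1 := by
    rw [Real.log_lt_iff_lt_exp (by norm_num)]
    linarith [Real.exp_one_gt_d9]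
  have hlog2p : 0 < Real.log 2 := Real.log_pos (by norm_num)
  have hmono : StrictMonoOn F (Set.Icc 0 (Real.log 2)) := by
    apply strictMonoOn_of_deriv_pos (convex_Icc _ _) hFc.continuousOn
    intro u hu
    rw [interior_Icc] at hu
    rw [(hasDerivAt_F u).deriv]
    have : Real.exp u < Real.exp (Real.log 2) := Real.exp_lt_exp.2 hu.2
    rw [Real.exp_log (by norm_num : (0:ℝ) < 2)] at this
    linarith
  have hanti : StrictAntiOn F (Set.Icc (Real.log 2) 1) := by
    apply strictAntiOn_of_deriv_neg (convex_Icc _ _) hFc.continuousOn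
    intro u hu
    rw [interior_Icc] at hu
    rw [(hasDerivAt_F u).deriv]
    have : Real.exp (Real.log 2) < Real.exp u := Real.exp_lt_exp.2 hu.1
    rw [Real.exp_log (by norm_num : (0:ℝ) < 2)] at this
    linarith
  have hF0 : F 0 = 0 := by simp [hF]
  have hF1 : 0 < F 1 := by
    simp only [hF]
    have := Real.exp_one_lt_d9
    norm_num
    linarith
  have hFs : 0 < F s := by
    rcases le_or_gt s (Real.log 2) with h | h
    · have := hmono (Set.mem_Icc.2 ⟨le_refl 0, hlog2p.le⟩)
        (Set.mem_Icc.2 ⟨h0.le, h⟩) h0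
      rw [hF0] at this; exact this
    · have := hanti (Set.mem_Icc.2 ⟨h.le, h1.le⟩)
        (Set.mem_Icc.2 ⟨hlog2.le, le_refl 1⟩) h1
      linarith
  simp only [hF] at hFs
  linarith

lemma phi_inv_e_gt (he : Real.exp 1 < μ) (hμ2 : μ < Real.exp 2) :
    μ⁻¹ < phi μ (Real.exp 1)⁻¹ := by
  have hμ : (0:ℝ) < μ := lt_trans (Real.exp_pos 1) he
  set r := Real.log μ with hr
  have hr1 : 1 < r := by
    rw [hr, Real.lt_log_iff_exp_lt hμ]
    exact he
  have hr2 : r < 2 := log_lt_two hμ hμ2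
  have h1 : μ * (Real.exp 1)⁻¹ = Real.exp (r - 1) := by
    rw [Real.exp_sub, hr, Real.exp_log hμ, div_eq_mul_inv]
  have h2 : phi μ (Real.exp 1)⁻¹ = Real.exp (r - 1 - Real.exp (r - 1)) := by
    unfold phi
    calc μ * (Real.exp 1)⁻¹ * Real.exp (-(μ * (Real.exp 1)⁻¹))
        = Real.exp (r - 1) * Real.exp (-(Real.exp (r - 1))) := by rw [h1]
      _ = Real.exp ((r - 1) + -(Real.exp (r - 1))) := (Real.exp_add _ _).symm
      _ = Real.exp (r - 1 - Real.exp (r - 1)) := by ring_nf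
  have h3 : μ⁻¹ = Real.exp (-r) := by
    rw [Real.exp_neg, Real.exp_log hμ]
  rw [h2, h3]
  apply Real.exp_lt_exp.2
  have h4 := aux_exp_lt (by linarith : 0 < r - 1) (by linarith : r - 1 < 1)
  linarith

end Phi3
open Finset

variable {d : ℕ}

/-- sup-norm ball as a bx -/
noncomputable def bx (x : Fin d → ℤ) (L : ℕ) : Finset (Fin d → ℤ) :=
  Finset.Icc (fun i => x i - (L : ℤ)) (fun i => x i + (L : ℤ))

lemma mem_bx {x y : Fin d → ℤ} {L : ℕ} :
    y ∈ bx x L ↔ ∀ i, x i - (L:ℤ) ≤ y i ∧ y i ≤ x i + (L:ℤ) := by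
  unfold bx
  rw [Finset.mem_Icc]
  constructor
  · rintro ⟨h1, h2⟩ i; exact ⟨h1 i, h2 i⟩
  · intro h; exact ⟨fun i => (h i).1, fun i => (h i).2⟩

lemma mem_bx_comm {x y : Fin d → ℤ} {L : ℕ} : y ∈ bx x L ↔ x ∈ bx y L := by
  rw [mem_bx, mem_bx]
  constructor <;> (intro h i; have := h i; omega)

lemma not_mem_bx {x y : Fin d → ℤ} {L : ℕ} (h : y ∉ bx x L) :
    ∃ i, (L:ℤ) < |y i - x i| := by
  rw [mem_bx] at h
  push_neg at h
  obtain ⟨i, hi⟩ := h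
  refine ⟨i, ?_⟩
  rw [lt_abs]
  rcases le_or_gt (x i - (L:ℤ)) (y i) with h1 | h1
  · left; have := hi h1; omega
  · right; omega

lemma self_mem_bx (x : Fin d → ℤ) (L : ℕ) : x ∈ bx x L := by
  rw [mem_bx]; intro i; constructor <;> omega

lemma bx_subset {x y : Fin d → ℤ} {L M : ℕ} (h : y ∈ bx x L) :
    bx y M ⊆ bx x (L + M) := by
  intro z hz
  rw [mem_bx] at *
  intro i
  have h1 := h i
  have h2 := hz i
  push_cast
  omega

lemma card_bx (x : Fin d → ℤ) (L : ℕ) : (bx x L).card = (2 * L + 1) ^ d := by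
  unfold bx
  rw [Pi.card_Icc]
  have : ∀ i : Fin d, (Finset.Icc (x i - (L:ℤ)) (x i + (L:ℤ))).card = 2 * L + 1 := by
    intro i
    rw [Int.card_Icc]
    omega
  rw [Finset.prod_congr rfl (fun i _ => this i)]
  simp

lemma sum_bx_sub (L : ℕ) (x y : Fin d → ℤ) (f : (Fin d → ℤ) → ℝ) :
    ∑ z ∈ bx x L, f (z - y) = ∑ w ∈ bx (x - y) L, f w := by
  apply Finset.sum_nbij' (fun z => z - y) (fun w => w + y)
  · intro a ha; rw [mem_bx] at *; intro i; have := ha i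
    simp only [Pi.sub_apply]; omega
  · intro a ha; rw [mem_bx] at *; intro i; have := ha i
    simp only [Pi.add_apply, Pi.sub_apply] at *; omega
  · intro a _; ext i; simp
  · intro a _; ext i; simp
  · intro a _; rfl

lemma sum_bx_reflect (L : ℕ) (x y : Fin d → ℤ) (f : (Fin d → ℤ) → ℝ) :
    ∑ z ∈ bx x L, f (y - z) = ∑ w ∈ bx (y - x) L, f w := by
  apply Finset.sum_nbij' (fun z => y - z) (fun w => y - w)
  · intro a ha; rw [mem_bx] at *; intro i; have := ha i
    simp only [Pi.sub_apply]; omega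
  · intro a ha; rw [mem_bx] at *; intro i; have := ha i
    simp only [Pi.sub_apply] at *; omega
  · intro a _; ext i; simp
  · intro a _; ext i; simp
  · intro a _; rfl

lemma sum_bx_neg (L : ℕ) (x : Fin d → ℤ) (f : (Fin d → ℤ) → ℝ) :
    ∑ z ∈ bx x L, f (-z) = ∑ w ∈ bx (-x) L, f w := by
  have := sum_bx_reflect L x 0 f
  simpa using this

/-- `n`-step transition kernel of the `R`-uniform random walk -/
noncomputable def ker (d R : ℕ) : ℕ → (Fin d → ℤ) → ℝ
  | 0, x => if x = 0 then 1 else 0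
  | n+1, x => ((2 * R + 1 : ℝ) ^ d)⁻¹ * ∑ z ∈ bx x R, ker d R n z

lemma bx_zero (x : Fin d → ℤ) : bx x 0 = {x} := by
  ext y
  rw [mem_bx, Finset.mem_singleton]
  constructor
  · intro h; funext i; have := h i; push_cast at this; omega
  · intro h; subst h; intro i; push_cast; omega

lemma bx_mono (x : Fin d → ℤ) {L M : ℕ} (h : L ≤ M) : bx x L ⊆ bx x M := by
  intro z hz
  rw [mem_bx] at *
  intro i
  have := hz i
  have : (L:ℤ) ≤ (M:ℤ) := by exact_mod_cast h
  omega

lemma ker_nonneg (d R : ℕ) : ∀ n x, 0 ≤ ker d R n x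
  | 0, x => by unfold ker; split <;> norm_num
  | n+1, x => by
    unfold ker
    apply mul_nonneg (by positivity)
    exact Finset.sum_nonneg fun z _ => ker_nonneg d R n z

lemma ker_eq_zero (d R : ℕ) :
    ∀ (n : ℕ) (x : Fin d → ℤ), (∃ i, ((n * R : ℕ) : ℤ) < |x i|) → ker d R n x = 0
  | 0, x => by
    rintro ⟨i, hi⟩
    unfold ker
    rw [if_neg]
    intro h
    subst h
    simp at hi
  | n+1, x => by
    rintro ⟨i, hi⟩
    unfold ker
    rw [Finset.sum_eq_zero, mul_zero]
    intro z hz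
    apply ker_eq_zero d R n
    refine ⟨i, ?_⟩
    rw [mem_bx] at hz
    have h1 := hz i
    rw [lt_abs] at hi ⊢
    push_cast at hi h1 ⊢
    rcases hi with h | h
    · left; nlinarith
    · right; nlinarith

lemma zero_mem_bx_iff {x : Fin d → ℤ} {L : ℕ} :
    (0 : Fin d → ℤ) ∈ bx x L ↔ ∀ i, |x i| ≤ (L:ℤ) := by
  rw [mem_bx]
  constructor
  · intro h i; have := h i; simp at this; rw [abs_le]; omega
  · intro h i; have := abs_le.1 (h i); simp; omega

lemma ker_one_eq (d R : ℕ) {x : Fin d → ℤ} (h : ∀ i, |x i| ≤ (R:ℤ)) :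
    ker d R 1 x = ((2 * R + 1 : ℝ) ^ d)⁻¹ := by
  show ((2 * R + 1 : ℝ) ^ d)⁻¹ * ∑ z ∈ bx x R, ker d R 0 z = _
  have : ∑ z ∈ bx x R, ker d R 0 z = 1 := by
    unfold ker
    rw [Finset.sum_ite_eq' (bx x R) 0 (fun _ => (1:ℝ))]
    rw [if_pos (zero_mem_bx_iff.2 h)]
  rw [this, mul_one]

lemma ker_mass (d R : ℕ) : ∀ n, ∑ y ∈ bx (0 : Fin d → ℤ) (n * R), ker d R n y = 1
  | 0 => by
    rw [Nat.zero_mul, bx_zero]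
    rw [Finset.sum_singleton]
    unfold ker
    rw [if_pos rfl]
  | (n+1) => by
    have IH := ker_mass d R n
    have hcpos : (0:ℝ) < ((2 * R + 1 : ℝ) ^ d) := by positivity
    set c : ℝ := ((2 * R + 1 : ℝ) ^ d)⁻¹ with hc
    set BIG := bx (0 : Fin d → ℤ) ((n+1) * R + R) with hBIG
    have hnR : n * R + R = (n+1) * R := by ring
    calc ∑ x ∈ bx (0:Fin d → ℤ) ((n+1) * R), ker d R (n+1) x
        = ∑ x ∈ bx (0:Fin d → ℤ) ((n+1) * R),
            c * ∑ z ∈ BIG, (if z ∈ bx x R then ker d R n z else 0) := by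
          apply Finset.sum_congr rfl
          intro x hx
          show c * ∑ z ∈ bx x R, ker d R n z = _
          congr 1
          rw [Finset.sum_ite_mem, Finset.inter_eq_right.2 (bx_subset hx)]
      _ = c * ∑ z ∈ BIG, ∑ x ∈ bx (0:Fin d → ℤ) ((n+1) * R),
            (if z ∈ bx x R then ker d R n z else 0) := by
          rw [← Finset.mul_sum, Finset.sum_comm]
      _ = c * ∑ z ∈ BIG,
            ((bx (0:Fin d → ℤ) ((n+1) * R) ∩ bx z R).card : ℝ) * ker d R n z := by
          congr 1
          apply Finset.sum_congr rfl
          intro z _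
          have : ∀ x, (z ∈ bx x R) = (x ∈ bx z R) := fun x => propext mem_bx_comm
          simp only [this]
          rw [Finset.sum_ite_mem, Finset.sum_const, nsmul_eq_mul]
      _ = c * ∑ z ∈ bx (0:Fin d → ℤ) (n * R),
            ((bx (0:Fin d → ℤ) ((n+1) * R) ∩ bx z R).card : ℝ) * ker d R n z := by
          congr 1
          apply (Finset.sum_subset (hBIG ▸ bx_mono _ (by nlinarith)) ?_).symm
          intro z _ hz
          have : ker d R n z = 0 := by
            apply ker_eq_zero
            obtain ⟨i, hi⟩ := not_mem_bx hz
            exact ⟨i, by simpa using hi⟩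
          rw [this, mul_zero]
      _ = c * ∑ z ∈ bx (0:Fin d → ℤ) (n * R), ((2 * R + 1:ℝ) ^ d) * ker d R n z := by
          congr 1
          apply Finset.sum_congr rfl
          intro z hz
          have hsub : bx z R ⊆ bx (0:Fin d → ℤ) ((n+1) * R) := by
            rw [← hnR]
            exact bx_subset hz
          rw [Finset.inter_eq_right.2 hsub, card_bx]
          push_cast
          ring
      _ = 1 := by
          rw [← Finset.mul_sum, ← mul_assoc, hc, inv_mul_cancel₀ (ne_of_gt hcpos), one_mul, IH]

lemma ker_le_one (d R : ℕ) (n : ℕ) (x : Fin d → ℤ) : ker d R n x ≤ 1 := by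
  rcases le_or_gt (ker d R n x) 0 with h | h
  · linarith
  · have hx : x ∈ bx (0 : Fin d → ℤ) (n * R) := by
      by_contra hc
      obtain ⟨i, hi⟩ := not_mem_bx hc
      have : ker d R n x = 0 := ker_eq_zero d R n x ⟨i, by simpa using hi⟩
      linarith
    calc ker d R n x ≤ ∑ y ∈ bx (0 : Fin d → ℤ) (n * R), ker d R n y :=
          Finset.single_le_sum (fun y _ => ker_nonneg d R n y) hx
      _ = 1 := ker_mass d R n

lemma ker_CK_ge (d R : ℕ) (n : ℕ) :
    ∀ (m : ℕ) (x y : Fin d → ℤ), ker d R n y * ker d R m (x - y) ≤ ker d R (n + m) x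
  | 0, x, y => by
    rcases eq_or_ne x y with h | h
    · subst h
      show ker d R n x * (if x - x = 0 then (1:ℝ) else 0) ≤ ker d R n x
      rw [if_pos (by simp), mul_one]
    · show ker d R n y * (if x - y = 0 then (1:ℝ) else 0) ≤ ker d R (n+0) x
      rw [if_neg (fun hc => h (by rwa [sub_eq_zero] at hc)), mul_zero]
      exact ker_nonneg d R _ x
  | m+1, x, y => by
    show _ ≤ ((2 * R + 1 : ℝ) ^ d)⁻¹ * ∑ z ∈ bx x R, ker d R (n+m) z
    have h1 : ∀ z ∈ bx x R, ker d R n y * ker d R m (z - y) ≤ ker d R (n + m) z :=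
      fun z _ => ker_CK_ge d R n m z y
    have h2 : ∑ z ∈ bx x R, ker d R n y * ker d R m (z - y)
        ≤ ∑ z ∈ bx x R, ker d R (n+m) z := Finset.sum_le_sum h1
    have h3 : ∑ z ∈ bx x R, ker d R n y * ker d R m (z - y)
        = ker d R n y * ∑ w ∈ bx (x - y) R, ker d R m w := by
      rw [← sum_bx_sub R x y (ker d R m), Finset.mul_sum]
    have h4 : ker d R (m+1) (x - y)
        = ((2 * R + 1 : ℝ) ^ d)⁻¹ * ∑ w ∈ bx (x - y) R, ker d R m w := rfl
    calc ker d R n y * ker d R (m+1) (x - y)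
        = ((2 * R + 1 : ℝ) ^ d)⁻¹ * (ker d R n y * ∑ w ∈ bx (x - y) R, ker d R m w) := by
          rw [h4]; ring
      _ = ((2 * R + 1 : ℝ) ^ d)⁻¹ * ∑ z ∈ bx x R, ker d R n y * ker d R m (z - y) := by
          rw [h3]
      _ ≤ ((2 * R + 1 : ℝ) ^ d)⁻¹ * ∑ z ∈ bx x R, ker d R (n+m) z := by
          apply mul_le_mul_of_nonneg_left h2 (by positivity)

lemma ker_symm (d R : ℕ) : ∀ (n : ℕ) (x : Fin d → ℤ), ker d R n (-x) = ker d R n x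
  | 0, x => by
    unfold ker
    congr 1
    simp [neg_eq_zero]
  | n+1, x => by
    show ((2 * R + 1 : ℝ) ^ d)⁻¹ * ∑ z ∈ bx (-x) R, ker d R n z
        = ((2 * R + 1 : ℝ) ^ d)⁻¹ * ∑ z ∈ bx x R, ker d R n z
    congr 1
    rw [← sum_bx_neg R x (ker d R n)]
    apply Finset.sum_congr rfl
    intro z _
    exact ker_symm d R n z

lemma bx_nonempty (x : Fin d → ℤ) (L : ℕ) : (bx x L).Nonempty := ⟨x, self_mem_bx x L⟩

lemma ker_pigeonhole (d R n : ℕ) :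
    ∃ y, ((2 * (n * R) + 1 : ℝ) ^ d)⁻¹ ≤ ker d R n y := by
  by_contra hc
  push_neg at hc
  have h1 : ∑ y ∈ bx (0 : Fin d → ℤ) (n * R), ker d R n y
      < ∑ y ∈ bx (0 : Fin d → ℤ) (n * R), ((2 * (n * R) + 1 : ℝ) ^ d)⁻¹ :=
    Finset.sum_lt_sum_of_nonempty (bx_nonempty _ _) (fun y _ => hc y)
  rw [ker_mass d R n, Finset.sum_const, card_bx, nsmul_eq_mul] at h1
  push_cast at h1
  rw [mul_inv_cancel₀ (by positivity)] at h1
  exact absurd h1 (lt_irrefl 1)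

lemma ker_return (d R n : ℕ) :
    (((2 * (n * R) + 1 : ℝ) ^ d)⁻¹) ^ 2 ≤ ker d R (n + n) 0 := by
  obtain ⟨y, hy⟩ := ker_pigeonhole d R n
  have h1 : ker d R n y * ker d R n ((0:Fin d → ℤ) - y) ≤ ker d R (n + n) 0 :=
    ker_CK_ge d R n n 0 y
  rw [zero_sub, ker_symm] at h1
  have h2 : (((2 * (n * R) + 1 : ℝ) ^ d)⁻¹) ^ 2 ≤ ker d R n y * ker d R n y := by
    rw [sq]
    apply mul_le_mul hy hy (by positivity)
    exact ker_nonneg d R n y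
  linarith

lemma ker_pos (d R : ℕ) (hR : 1 ≤ R) :
    ∀ (n : ℕ) (x : Fin d → ℤ), (∀ i, |x i| ≤ ((n * R : ℕ) : ℤ)) → 0 < ker d R n x
  | 0, x => by
    intro h
    have : x = 0 := by
      funext i
      have hh := h i
      simp only [Nat.zero_mul, Nat.cast_zero] at hh
      have : x i = 0 := by rw [abs_le] at hh; omega
      simpa using this
    subst this
    unfold ker
    rw [if_pos rfl]
    norm_num
  | n+1, x => by
    intro h
    -- one clamped step
    set w : Fin d → ℤ := fun i => if x i > (R:ℤ) then (R:ℤ) else if x i < -(R:ℤ) then -(R:ℤ) else x i with hw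
    have hwbound : ∀ i, |w i| ≤ (R:ℤ) := by
      intro i
      rw [abs_le]
      simp only [hw]
      split_ifs <;> omega
    have hzbound : ∀ i, |x i - w i| ≤ ((n * R : ℕ) : ℤ) := by
      intro i
      have hhi := h i
      have hcast : (((n+1) * R : ℕ) : ℤ) = ((n * R : ℕ) : ℤ) + (R:ℤ) := by
        push_cast; ring
      rw [abs_le] at hhi ⊢
      rw [hcast] at hhi
      have hA : (0:ℤ) ≤ ((n * R : ℕ) : ℤ) := by positivity
      simp only [hw]
      split_ifs <;> omega
    have h1 : 0 < ker d R n (x - w) := ker_pos d R hR n (x - w) (fun i => hzbound i)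
    have h2 : ker d R 1 w = ((2 * R + 1 : ℝ) ^ d)⁻¹ := ker_one_eq d R hwbound
    have h3 : ker d R n (x - w) * ker d R 1 (x - (x - w)) ≤ ker d R (n + 1) x :=
      ker_CK_ge d R n 1 x (x - w)
    have h4 : x - (x - w) = w := by ring
    rw [h4, h2] at h3
    have : 0 < ker d R n (x - w) * ((2 * R + 1 : ℝ) ^ d)⁻¹ := by positivity
    linarith

section Lattice
variable {d R : ℕ} {μ : ℝ} {Ξ : ℕ → (Fin d → ℤ) → ℝ}

lemma dens_eq_bx (f : (Fin d → ℤ) → ℝ) (x : Fin d → ℤ) :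
    dens d R f x = ((2 * R + 1 : ℝ) ^ d)⁻¹ * ∑ y ∈ bx x R, f y := rfl

lemma dens_mem {A B : ℝ} {f : (Fin d → ℤ) → ℝ} {x : Fin d → ℤ}
    (hA : ∀ y ∈ bx x R, A ≤ f y) (hB : ∀ y ∈ bx x R, f y ≤ B) :
    A ≤ dens d R f x ∧ dens d R f x ≤ B := by
  have hcard : ((bx x R).card : ℝ) = (2 * R + 1 : ℝ) ^ d := by
    rw [card_bx]; push_cast; ring
  have hpos : (0:ℝ) < (2 * R + 1 : ℝ) ^ d := by positivity
  rw [dens_eq_bx]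
  constructor
  · have h1 : (bx x R).card • A ≤ ∑ y ∈ bx x R, f y := Finset.card_nsmul_le_sum _ _ _ hA
    rw [nsmul_eq_mul, hcard] at h1
    calc A = ((2 * R + 1 : ℝ) ^ d)⁻¹ * ((2 * R + 1 : ℝ) ^ d * A) := by
          field_simp
      _ ≤ ((2 * R + 1 : ℝ) ^ d)⁻¹ * ∑ y ∈ bx x R, f y := by
          apply mul_le_mul_of_nonneg_left h1 (by positivity)
  · have h1 : ∑ y ∈ bx x R, f y ≤ (bx x R).card • B := Finset.sum_le_card_nsmul _ _ _ hB
    rw [nsmul_eq_mul, hcard] at h1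
    calc ((2 * R + 1 : ℝ) ^ d)⁻¹ * ∑ y ∈ bx x R, f y
        ≤ ((2 * R + 1 : ℝ) ^ d)⁻¹ * ((2 * R + 1 : ℝ) ^ d * B) := by
          apply mul_le_mul_of_nonneg_left h1 (by positivity)
      _ = B := by field_simp

lemma Xi_bounds (hμ1 : 1 < μ)
    (hΞ0 : ∀ x, Ξ 0 x ∈ Set.Icc (0 : ℝ) (Real.exp 1)⁻¹)
    (hΞ : ∀ n x, Ξ (n + 1) x = phi μ (dens d R (Ξ n) x)) :
    ∀ n x, 0 ≤ Ξ n x ∧ Ξ n x ≤ (Real.exp 1)⁻¹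
  | 0, x => ⟨(hΞ0 x).1, (hΞ0 x).2⟩
  | n+1, x => by
    rw [hΞ n x]
    have hd := dens_mem (R := R) (A := 0) (B := (Real.exp 1)⁻¹)
      (f := Ξ n) (x := x)
      (fun y _ => (Xi_bounds hμ1 hΞ0 hΞ n y).1)
      (fun y _ => (Xi_bounds hμ1 hΞ0 hΞ n y).2)
    exact ⟨phi_nonneg (by linarith) hd.1, phi_le μ _⟩

lemma Xi_LB (hμ1 : 1 < μ)
    (hΞ0 : ∀ x, Ξ 0 x ∈ Set.Icc (0 : ℝ) (Real.exp 1)⁻¹)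
    (hΞ : ∀ n x, Ξ (n + 1) x = phi μ (dens d R (Ξ n) x)) (n : ℕ) :
    ∀ (m : ℕ) (x : Fin d → ℤ),
      ∑ y ∈ bx x (m * R), ker d R m (y - x) *
        min (Real.sqrt μ ^ m * Ξ n y) (bconst μ) ≤ Ξ (n + m) x
  | 0, x => by
    rw [Nat.zero_mul, bx_zero, Finset.sum_singleton, sub_self]
    show (if (0 : Fin d → ℤ) = 0 then (1:ℝ) else 0) * _ ≤ _
    rw [if_pos rfl, one_mul, pow_zero, one_mul]
    exact min_le_left _ _
  | m+1, x => by
    have hXb := Xi_bounds hμ1 hΞ0 hΞ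
    set a := Real.sqrt μ with ha
    have ha1 : 1 < a := one_lt_sqrt hμ1
    set b := bconst μ with hb
    have hb0 : 0 < b := bconst_pos hμ1
    have hVpos : (0:ℝ) < (2 * R + 1 : ℝ) ^ d := by positivity
    set c : ℝ := ((2 * R + 1 : ℝ) ^ d)⁻¹ with hc
    have hcnn : (0:ℝ) ≤ c := by positivity
    -- the one-step phi bound
    have hdens := dens_mem (R := R) (A := 0) (B := (Real.exp 1)⁻¹) (f := Ξ (n+m)) (x := x)
      (fun y _ => (hXb (n+m) y).1) (fun y _ => (hXb (n+m) y).2)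
    have hphi : min (a * dens d R (Ξ (n+m)) x) b ≤ Ξ (n + (m+1)) x := by
      rw [show n + (m+1) = (n+m) + 1 from rfl, hΞ (n+m) x]
      exact phi_ge_min hμ1 hdens.1 hdens.2
    set BIGB := bx x (m * R + R) with hBIGB
    set S := ∑ y ∈ BIGB, ker d R (m+1) (y - x) * min (a ^ (m+1) * Ξ n y) b with hS
    set T := ∑ y ∈ BIGB, ker d R (m+1) (y - x) * min (a ^ m * Ξ n y) b with hT
    -- mass of the (m+1)-kernel over BIGB
    have hmass : ∑ y ∈ BIGB, ker d R (m+1) (y - x) = 1 := by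
      rw [hBIGB]
      rw [sum_bx_sub (m * R + R) x x (ker d R (m+1)), sub_self]
      rw [show m * R + R = (m+1) * R from by ring]
      exact ker_mass d R (m+1)
    -- claim 1 : S ≤ b
    have hSb : S ≤ b := by
      have h1 : ∀ y ∈ BIGB, ker d R (m+1) (y - x) * min (a ^ (m+1) * Ξ n y) b
          ≤ ker d R (m+1) (y - x) * b := by
        intro y _
        apply mul_le_mul_of_nonneg_left (min_le_right _ _) (ker_nonneg d R _ _)
      calc S ≤ ∑ y ∈ BIGB, ker d R (m+1) (y - x) * b := Finset.sum_le_sum h1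
        _ = (∑ y ∈ BIGB, ker d R (m+1) (y - x)) * b := by rw [← Finset.sum_mul]
        _ = b := by rw [hmass, one_mul]
    -- claim 2 : S ≤ a * T
    have hST : S ≤ a * T := by
      rw [hT, Finset.mul_sum]
      apply Finset.sum_le_sum
      intro y _
      have key : min (a ^ (m+1) * Ξ n y) b ≤ a * min (a ^ m * Ξ n y) b := by
        have h1 : a * min (a ^ m * Ξ n y) b = min (a ^ (m+1) * Ξ n y) (a * b) := by
          rw [mul_min_of_nonneg _ _ (by linarith : (0:ℝ) ≤ a)]
          rw [← mul_assoc, ← pow_succ']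
        rw [h1]
        apply min_le_min (le_refl _)
        nlinarith
      calc ker d R (m+1) (y - x) * min (a ^ (m+1) * Ξ n y) b
          ≤ ker d R (m+1) (y - x) * (a * min (a ^ m * Ξ n y) b) :=
            mul_le_mul_of_nonneg_left key (ker_nonneg d R _ _)
        _ = a * (ker d R (m+1) (y - x) * min (a ^ m * Ξ n y) b) := by ring
    -- T ≤ dens
    have hTd : T ≤ dens d R (Ξ (n+m)) x := by
      -- expand ker (m+1) as one step
      have hker1 : ∀ y : Fin d → ℤ, ((2 * R + 1 : ℝ) ^ d) * ker d R (m+1) (y - x)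
          = ∑ z ∈ bx x R, ker d R m (y - z) := by
        intro y
        have hdef : ker d R (m+1) (y - x)
            = c * ∑ w ∈ bx (y - x) R, ker d R m w := rfl
        rw [hdef, ← sum_bx_reflect R x y (ker d R m), ← mul_assoc, hc,
          mul_inv_cancel₀ (ne_of_gt hVpos), one_mul]
      -- inner sums extended to BIGB
      have hinner : ∀ z ∈ bx x R,
          ∑ y ∈ bx z (m * R), ker d R m (y - z) * min (a ^ m * Ξ n y) b
          = ∑ y ∈ BIGB, ker d R m (y - z) * min (a ^ m * Ξ n y) b := by
        intro z hz
        apply Finset.sum_subset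
        · rw [hBIGB]
          have := bx_subset (L := R) (M := m * R) hz
          rw [show R + m * R = m * R + R from by ring] at this
          exact this
        · intro y _ hy
          obtain ⟨i, hi⟩ := not_mem_bx hy
          rw [ker_eq_zero d R m _ ⟨i, by simpa using hi⟩, zero_mul]
      have hdouble : ∑ z ∈ bx x R, ∑ y ∈ bx z (m * R),
            ker d R m (y - z) * min (a ^ m * Ξ n y) b
          = ((2 * R + 1 : ℝ) ^ d) * T := by
        calc ∑ z ∈ bx x R, ∑ y ∈ bx z (m * R), ker d R m (y - z) * min (a ^ m * Ξ n y) b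
            = ∑ z ∈ bx x R, ∑ y ∈ BIGB, ker d R m (y - z) * min (a ^ m * Ξ n y) b :=
              Finset.sum_congr rfl hinner
          _ = ∑ y ∈ BIGB, ∑ z ∈ bx x R, ker d R m (y - z) * min (a ^ m * Ξ n y) b :=
              Finset.sum_comm
          _ = ∑ y ∈ BIGB, (∑ z ∈ bx x R, ker d R m (y - z)) * min (a ^ m * Ξ n y) b := by
              apply Finset.sum_congr rfl
              intro y _
              rw [Finset.sum_mul]
          _ = ∑ y ∈ BIGB, ((2 * R + 1 : ℝ) ^ d) * (ker d R (m+1) (y - x) * min (a ^ m * Ξ n y) b) := by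
              apply Finset.sum_congr rfl
              intro y _
              rw [← hker1 y]
              ring
          _ = ((2 * R + 1 : ℝ) ^ d) * T := by rw [← Finset.mul_sum, hT]
      -- now dens ≥ c * double sum = T
      have hIH : ∀ z ∈ bx x R, ∑ y ∈ bx z (m * R),
          ker d R m (y - z) * min (a ^ m * Ξ n y) b ≤ Ξ (n + m) z :=
        fun z _ => Xi_LB hμ1 hΞ0 hΞ n m z
      have h2 : ((2 * R + 1 : ℝ) ^ d) * T ≤ ∑ z ∈ bx x R, Ξ (n+m) z := by
        rw [← hdouble]
        exact Finset.sum_le_sum hIH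
      rw [dens_eq_bx]
      calc T = c * (((2 * R + 1 : ℝ) ^ d) * T) := by
            rw [hc, ← mul_assoc, inv_mul_cancel₀ (ne_of_gt hVpos), one_mul]
        _ ≤ c * ∑ z ∈ bx x R, Ξ (n+m) z := mul_le_mul_of_nonneg_left h2 hcnn
    -- put together
    have hfinal : S ≤ min (a * dens d R (Ξ (n+m)) x) b := by
      apply le_min _ hSb
      calc S ≤ a * T := hST
        _ ≤ a * dens d R (Ξ (n+m)) x := by
            apply mul_le_mul_of_nonneg_left hTd (by linarith)
    rw [show (m+1) * R = m * R + R from by ring]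
    exact le_trans hfinal hphi

end Lattice

section Bootstrap
variable {d R : ℕ} {μ : ℝ} {Ξ : ℕ → (Fin d → ℤ) → ℝ}

lemma min_nonneg' {x y : ℝ} (hx : 0 ≤ x) (hy : 0 ≤ y) : 0 ≤ min x y := le_min hx hy

lemma Xi_single (hμ1 : 1 < μ)
    (hΞ0 : ∀ x, Ξ 0 x ∈ Set.Icc (0 : ℝ) (Real.exp 1)⁻¹)
    (hΞ : ∀ n x, Ξ (n + 1) x = phi μ (dens d R (Ξ n) x))
    (n m : ℕ) (x y : Fin d → ℤ) (hy : y ∈ bx x (m * R)) :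
    ker d R m (y - x) * min (Real.sqrt μ ^ m * Ξ n y) (bconst μ) ≤ Ξ (n + m) x := by
  have hXb := Xi_bounds hμ1 hΞ0 hΞ
  refine le_trans (Finset.single_le_sum
    (f := fun y => ker d R m (y - x) * min (Real.sqrt μ ^ m * Ξ n y) (bconst μ))
    ?_ hy) (Xi_LB hμ1 hΞ0 hΞ n m x)
  intro z _
  apply mul_nonneg (ker_nonneg d R _ _)
  apply min_nonneg'
  · have := (hXb n z).1
    positivity
  · exact (bconst_pos hμ1).le

lemma Xi_pos_eventually (hR : 1 ≤ R) (hμ1 : 1 < μ)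
    (hΞ0 : ∀ x, Ξ 0 x ∈ Set.Icc (0 : ℝ) (Real.exp 1)⁻¹)
    (hpos : 0 < Ξ 0 (fun _ => 0))
    (hΞ : ∀ n x, Ξ (n + 1) x = phi μ (dens d R (Ξ n) x))
    (z : Fin d → ℤ) :
    ∃ N, ∀ n ≥ N, 0 < Ξ n z := by
  classical
  set N : ℕ := Finset.univ.sup fun i => (z i).natAbs with hN
  refine ⟨N, ?_⟩
  intro n hn
  have hmem : (0 : Fin d → ℤ) ∈ bx z (n * R) := by
    rw [mem_bx]
    intro i
    have h1 : (z i).natAbs ≤ N :=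
      Finset.le_sup (f := fun i => (z i).natAbs) (Finset.mem_univ i)
    have h2 : N ≤ n := hn
    have h3 : n ≤ n * R := Nat.le_mul_of_pos_right n (by omega)
    have h4 : (z i).natAbs ≤ n * R := by omega
    have h5 : |z i| ≤ ((n * R : ℕ) : ℤ) := by
      rw [Int.abs_eq_natAbs]
      exact_mod_cast h4
    rw [abs_le] at h5
    simp only [Pi.zero_apply]
    omega
  have hsingle := Xi_single hμ1 hΞ0 hΞ 0 n z 0 hmem
  rw [zero_add] at hsingle
  have hker : 0 < ker d R n ((0 : Fin d → ℤ) - z) := by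
    apply ker_pos d R hR
    intro i
    rw [mem_bx] at hmem
    have := hmem i
    simp only [Pi.sub_apply, Pi.zero_apply] at *
    rw [abs_le]
    omega
  have hΞ00 : Ξ 0 0 = Ξ 0 (fun _ => 0) := rfl
  have hmin : 0 < min (Real.sqrt μ ^ n * Ξ 0 0) (bconst μ) := by
    apply lt_min _ (bconst_pos hμ1)
    rw [hΞ00]
    have : (0:ℝ) < Real.sqrt μ := by
      have := one_lt_sqrt hμ1; linarith
    positivity
  calc (0:ℝ) < ker d R n ((0:Fin d → ℤ) - z) * min (Real.sqrt μ ^ n * Ξ 0 0) (bconst μ) :=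
        mul_pos hker hmin
    _ ≤ Ξ n z := hsingle

lemma exists_good_m (d R : ℕ) {a : ℝ} (ha : 1 < a) :
    ∃ m : ℕ, 1 ≤ m ∧ 0 < ker d R m 0 ∧ 1 < a ^ m * ker d R m 0 := by
  have ha2 : (1:ℝ) < a ^ 2 := by nlinarith
  have hlo := isLittleO_pow_const_const_pow_of_one_lt (R := ℝ) (2 * d) ha2
  have hc : (0:ℝ) < (((2 * R + 3 : ℕ) : ℝ) ^ (2 * d))⁻¹ / 2 := by positivity
  have hev := hlo.def hc
  rw [Filter.eventually_atTop] at hev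
  obtain ⟨N, hNn⟩ := hev
  set n := max N 1 with hn
  have hn1 : 1 ≤ n := le_max_right _ _
  have hnN : N ≤ n := le_max_left _ _
  have hkey : ((2 * (n * R) + 1 : ℝ)) ^ (2 * d) < a ^ (n + n) := by
    have h1 := hNn n hnN
    rw [Real.norm_eq_abs, Real.norm_eq_abs] at h1
    have h2 : |((n:ℝ)) ^ (2*d)| = ((n:ℝ)) ^ (2*d) := abs_of_nonneg (by positivity)
    have h3 : |(a^2) ^ n| = (a^2)^n := abs_of_nonneg (by positivity)
    rw [h2, h3] at h1
    have h4 : (2 * ((n:ℝ) * R) + 1) ≤ ((2 * R + 3 : ℕ) : ℝ) * n := by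
      push_cast
      have : (1:ℝ) ≤ n := by exact_mod_cast hn1
      nlinarith [this, (by positivity : (0:ℝ) ≤ (R:ℝ))]
    have h5 : ((2 * ((n:ℝ) * R) + 1)) ^ (2*d) ≤ (((2 * R + 3 : ℕ) : ℝ) * n) ^ (2*d) := by
      apply pow_le_pow_left₀ (by positivity) h4
    have h6 : (((2 * R + 3 : ℕ) : ℝ) * n) ^ (2*d)
        = ((2 * R + 3 : ℕ) : ℝ) ^ (2*d) * ((n:ℝ)) ^ (2*d) := by
      rw [mul_pow]
    have h7 : (0:ℝ) < ((2 * R + 3 : ℕ) : ℝ) ^ (2*d) := by positivity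
    have h8 : ((n:ℝ)) ^ (2*d) ≤ ((((2 * R + 3 : ℕ) : ℝ) ^ (2 * d))⁻¹ / 2) * (a^2)^n := h1
    have h9 : (a^2)^n = a^(n+n) := by
      rw [← pow_mul]
      congr 1
      ring
    have h10 : (0:ℝ) < (a^2)^n := by positivity
    calc ((2 * ((n:ℝ) * R) + 1)) ^ (2*d)
        ≤ ((2 * R + 3 : ℕ) : ℝ) ^ (2*d) * ((n:ℝ)) ^ (2*d) := by rw [← h6]; exact h5
      _ ≤ ((2 * R + 3 : ℕ) : ℝ) ^ (2*d) * (((((2 * R + 3 : ℕ) : ℝ) ^ (2 * d))⁻¹ / 2) * (a^2)^n) :=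
          mul_le_mul_of_nonneg_left h8 h7.le
      _ = (a^2)^n / 2 := by field_simp
      _ < (a^2)^n := by linarith
      _ = a^(n+n) := h9
  refine ⟨n + n, by omega, ?_, ?_⟩
  · calc (0:ℝ) < (((2 * (n * R) + 1 : ℝ) ^ d)⁻¹) ^ 2 := by positivity
      _ ≤ ker d R (n+n) 0 := ker_return d R n
  · have hinv : (((2 * (n * R) + 1 : ℝ) ^ d)⁻¹) ^ 2
        = ((2 * (n * R) + 1 : ℝ) ^ (2*d))⁻¹ := by
      rw [← inv_pow, ← pow_mul]
      congr 1
      ring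
    have h1 : ((2 * (n * R) + 1 : ℝ) ^ (2*d))⁻¹ ≤ ker d R (n+n) 0 := by
      rw [← hinv]; exact ker_return d R n
    have h2 : (1:ℝ) = ((2 * (n * R) + 1 : ℝ) ^ (2*d)) * ((2 * (n * R) + 1 : ℝ) ^ (2*d))⁻¹ := by
      rw [mul_inv_cancel₀ (by positivity)]
    calc (1:ℝ) = _ := h2
      _ < a ^ (n+n) * ((2 * (n * R) + 1 : ℝ) ^ (2*d))⁻¹ :=
          mul_lt_mul_of_pos_right hkey (by positivity)
      _ ≤ a ^ (n+n) * ker d R (n+n) 0 := by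
          apply mul_le_mul_of_nonneg_left h1 (by positivity)

lemma StepA (hR : 1 ≤ R) (hμ1 : 1 < μ)
    (hΞ0 : ∀ x, Ξ 0 x ∈ Set.Icc (0 : ℝ) (Real.exp 1)⁻¹)
    (hpos : 0 < Ξ 0 (fun _ => 0))
    (hΞ : ∀ n x, Ξ (n + 1) x = phi μ (dens d R (Ξ n) x)) :
    ∃ α : ℝ, 0 < α ∧ α ≤ bconst μ ∧ ∀ z, ∃ N, ∀ n ≥ N, α ≤ Ξ n z := by
  classical
  have hXb := Xi_bounds hμ1 hΞ0 hΞ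
  set a := Real.sqrt μ with ha
  have ha1 : 1 < a := one_lt_sqrt hμ1
  set b := bconst μ with hb
  have hb0 : 0 < b := bconst_pos hμ1
  obtain ⟨m, hm1, hρ0, hρ1⟩ := exists_good_m d R ha1
  set ρ := ker d R m 0 with hρ
  have hρle : ρ ≤ 1 := ker_le_one d R m 0
  set γ := a ^ m * ρ with hγ
  have hγ1 : 1 < γ := hρ1
  refine ⟨ρ * b, by positivity, by nlinarith, ?_⟩
  intro z
  obtain ⟨N₀, hN₀⟩ := Xi_pos_eventually hR hμ1 hΞ0 hpos hΞ z
  -- the single-site bootstrap inequality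
  have hboot : ∀ n, ρ * min (a ^ m * Ξ n z) b ≤ Ξ (n + m) z := by
    intro n
    have := Xi_single hμ1 hΞ0 hΞ n m z z (self_mem_bx z (m * R))
    rw [sub_self] at this
    exact this
  -- iterated bound
  have hiter : ∀ n, ∀ k, min (γ ^ k * Ξ n z) (ρ * b) ≤ Ξ (n + k * m) z := by
    intro n k
    induction k with
    | zero =>
      rw [pow_zero, one_mul, Nat.zero_mul, Nat.add_zero]
      exact min_le_left _ _
    | succ k IH =>
      have hu := hboot (n + k * m)
      rw [show n + k * m + m = n + (k+1) * m from by ring] at hu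
      refine le_trans ?_ hu
      -- min (γ^(k+1) Ξ n z) (ρ b) ≤ ρ * min (a^m * Ξ (n + k*m) z) b
      set u := Ξ (n + k * m) z with hudef
      set v := Ξ n z with hvdef
      have hv0 : 0 ≤ v := (hXb n z).1
      have hu0 : 0 ≤ u := (hXb _ z).1
      have hρb : ρ * min (a ^ m * min (γ ^ k * v) (ρ * b)) b
          ≤ ρ * min (a ^ m * u) b := by
        apply mul_le_mul_of_nonneg_left _ (le_of_lt hρ0)
        apply min_le_min _ (le_refl b)
        apply mul_le_mul_of_nonneg_left IH (by positivity)
      refine le_trans ?_ hρb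
      -- show min (γ^(k+1) v) (ρ b) ≤ ρ * min (a^m * min (γ^k v) (ρ b)) b
      rcases le_total (γ ^ k * v) (ρ * b) with hcase | hcase
      · rw [min_eq_left hcase]
        have : ρ * min (a ^ m * (γ ^ k * v)) b
            = min (γ ^ (k+1) * v) (ρ * b) := by
          rw [mul_min_of_nonneg _ _ (le_of_lt hρ0)]
          congr 1
          rw [hγ, pow_succ]
          ring
        rw [this]
      · rw [min_eq_right hcase]
        have hb' : b ≤ a ^ m * (ρ * b) := by
          have h1 : (1:ℝ) ≤ a ^ m * ρ := le_of_lt hγ1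
          nlinarith
        rw [min_eq_right hb']
        exact min_le_right _ _
  -- base values on the first m slots after N₀
  have hmne : (Finset.range m).Nonempty := ⟨0, Finset.mem_range.2 (by omega)⟩
  set ε := (Finset.range m).inf' hmne (fun j => Ξ (N₀ + j) z) with hε
  have hε0 : 0 < ε := by
    rw [hε, Finset.lt_inf'_iff]
    intro j _
    exact hN₀ (N₀ + j) (by omega)
  obtain ⟨K, hK⟩ := pow_unbounded_of_one_lt (ρ * b / ε) hγ1
  refine ⟨N₀ + K * m + m, ?_⟩
  intro n hn
  set q := (n - N₀) / m with hq
  set r' := (n - N₀) % m with hr'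
  have hm0 : 0 < m := by omega
  have hrm : r' < m := Nat.mod_lt _ hm0
  have hdm : m * q + r' = n - N₀ := Nat.div_add_mod _ m
  have hqK : K ≤ q := by
    rw [hq]
    rw [Nat.le_div_iff_mul_le hm0]
    omega
  have hsplit : (N₀ + r') + q * m = n := by
    calc (N₀ + r') + q * m = N₀ + (m * q + r') := by ring
      _ = N₀ + (n - N₀) := by rw [hdm]
      _ = n := by omega
  have hbase : ε ≤ Ξ (N₀ + r') z := by
    rw [hε]
    exact Finset.inf'_le _ (Finset.mem_range.2 hrm)
  have hKγ : ρ * b ≤ γ ^ q * Ξ (N₀ + r') z := by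
    have h1 : γ ^ K ≤ γ ^ q := pow_le_pow_right₀ (by linarith) hqK
    have h2 : ρ * b / ε < γ ^ K := hK
    have h3 : ρ * b < γ ^ K * ε := by
      rw [div_lt_iff₀ hε0] at h2
      linarith
    calc ρ * b ≤ γ ^ K * ε := h3.le
      _ ≤ γ ^ q * Ξ (N₀ + r') z := by
        apply mul_le_mul h1 hbase (le_of_lt hε0) (by positivity)
  have := hiter (N₀ + r') q
  rw [hsplit] at this
  calc ρ * b = min (ρ * b) (ρ * b) := (min_self _).symm
    _ ≤ min (γ ^ q * Ξ (N₀ + r') z) (ρ * b) := min_le_min hKγ (le_refl _)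
    _ ≤ Ξ n z := this

end Bootstrap

section Dynamics
variable {d R : ℕ} {μ : ℝ} {Ξ : ℕ → (Fin d → ℤ) → ℝ}

/-- eventual confinement of all lattice sites in `[A,B]` -/
def Ev (Ξ : ℕ → (Fin d → ℤ) → ℝ) (A B : ℝ) : Prop :=
  ∀ z, ∃ N, ∀ n ≥ N, A ≤ Ξ n z ∧ Ξ n z ≤ B

lemma Ev_weaken {A B A' B' : ℝ} (hA : A' ≤ A) (hB : B ≤ B') (h : Ev Ξ A B) :
    Ev Ξ A' B' := by
  intro z
  obtain ⟨N, hN⟩ := h z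
  exact ⟨N, fun n hn => ⟨le_trans hA (hN n hn).1, le_trans (hN n hn).2 hB⟩⟩

lemma Ev_step (hΞ : ∀ n x, Ξ (n + 1) x = phi μ (dens d R (Ξ n) x))
    {A B A' B' : ℝ} (hEv : Ev Ξ A B)
    (himg : ∀ w, A ≤ w → w ≤ B → A' ≤ phi μ w ∧ phi μ w ≤ B') :
    Ev Ξ A' B' := by
  classical
  choose N hN using hEv
  intro z
  refine ⟨(Finset.sup (bx z R) N) + 1, ?_⟩
  intro n hn
  obtain ⟨n', rfl⟩ : ∃ n', n = n' + 1 := ⟨n - 1, by omega⟩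
  rw [hΞ n' z]
  have hd := dens_mem (R := R) (A := A) (B := B) (f := Ξ n') (x := z)
    (fun y hy => (hN y n'
      (le_trans (Finset.le_sup (f := N) hy) (by omega))).1)
    (fun y hy => (hN y n'
      (le_trans (Finset.le_sup (f := N) hy) (by omega))).2)
  exact himg _ hd.1 hd.2

lemma Ev_trap (hμ1 : 1 < μ) (hμ2 : μ < Real.exp 2)
    (hΞ : ∀ n x, Ξ (n + 1) x = phi μ (dens d R (Ξ n) x))
    {p q : ℝ} (hp0 : 0 < p) (hpq : p ≤ q)
    (hmono : MonotoneOn (phi μ) (Set.Icc p q) ∨ AntitoneOn (phi μ) (Set.Icc p q))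
    (hinv : ∀ w, p ≤ w → w ≤ q → p ≤ phi μ w ∧ phi μ w ≤ q)
    (hEv : Ev Ξ p q) (z : Fin d → ℤ) :
    Filter.Tendsto (fun n => Ξ n z) Filter.atTop (nhds (Real.log μ / μ)) := by
  have hθp : 0 < Real.log μ / μ := theta_pos hμ1
  set θ := Real.log μ / μ with hθ
  -- θ lies in the trap
  have hpθ : p ≤ θ := by
    by_contra hc
    push_neg at hc
    have h1 := (hinv p (le_refl p) hpq).1
    have h2 := phi_lt_self hμ1 (x := p) (by rw [← hθ]; exact hc)
    linarith
  have hθq : θ ≤ q := by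
    by_contra hc
    push_neg at hc
    have h1 := (hinv q hpq (le_refl q)).2
    have h2 := phi_gt_self hμ1 (x := q) (lt_of_lt_of_le hp0 hpq)
      (by rw [← hθ]; exact hc)
    linarith
  set g2 : ℝ → ℝ := fun w => phi μ (phi μ w) with hg2
  have hg2cont : Continuous g2 := (continuous_phi μ).comp (continuous_phi μ)
  have hg2θ : g2 θ = θ := by
    simp only [hg2]
    rw [hθ, phi_theta hμ1, phi_theta hμ1]
  have hginv : ∀ w, p ≤ w → w ≤ q → p ≤ g2 w ∧ g2 w ≤ q := by
    intro w h1 h2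
    exact hinv _ (hinv w h1 h2).1 (hinv w h1 h2).2
  have hg2mono : ∀ w1 w2 : ℝ, p ≤ w1 → w1 ≤ w2 → w2 ≤ q → g2 w1 ≤ g2 w2 := by
    intro w1 w2 h1 h12 h2
    have hw1 : w1 ∈ Set.Icc p q := ⟨h1, le_trans h12 h2⟩
    have hw2 : w2 ∈ Set.Icc p q := ⟨le_trans h1 h12, h2⟩
    have hph1 := hinv w1 hw1.1 hw1.2
    have hph2 := hinv w2 hw2.1 hw2.2
    rcases hmono with hM | hA
    · exact hM ⟨hph1.1, hph1.2⟩ ⟨hph2.1, hph2.2⟩ (hM hw1 hw2 h12)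
    · exact hA ⟨hph2.1, hph2.2⟩ ⟨hph1.1, hph1.2⟩ (hA hw1 hw2 h12)
  set u : ℕ → ℝ := fun k => g2^[k] p with hu
  set v : ℕ → ℝ := fun k => g2^[k] q with hv
  have hu_succ : ∀ k, u (k+1) = g2 (u k) := by
    intro k; simp only [hu]; rw [Function.iterate_succ_apply']
  have hv_succ : ∀ k, v (k+1) = g2 (v k) := by
    intro k; simp only [hv]; rw [Function.iterate_succ_apply']
  have hu0 : u 0 = p := rfl
  have hv0 : v 0 = q := rfl
  have hu_mem : ∀ k, p ≤ u k ∧ u k ≤ q := by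
    intro k
    induction k with
    | zero => exact ⟨le_refl p, hpq⟩
    | succ k IH => rw [hu_succ]; exact hginv _ IH.1 IH.2
  have hv_mem : ∀ k, p ≤ v k ∧ v k ≤ q := by
    intro k
    induction k with
    | zero => exact ⟨hpq, le_refl q⟩
    | succ k IH => rw [hv_succ]; exact hginv _ IH.1 IH.2
  have huθ : ∀ k, u k ≤ θ := by
    intro k
    induction k with
    | zero => exact hpθ
    | succ k IH =>
      rw [hu_succ, ← hg2θ]
      exact hg2mono _ _ (hu_mem k).1 IH hθq
  have hvθ : ∀ k, θ ≤ v k := by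
    intro k
    induction k with
    | zero => exact hθq
    | succ k IH =>
      rw [hv_succ, ← hg2θ]
      exact hg2mono _ _ hpθ IH (hv_mem k).2
  have hu_mono : Monotone u := by
    apply monotone_nat_of_le_succ
    intro k
    rw [hu_succ]
    rcases eq_or_lt_of_le (huθ k) with he | hlt
    · rw [he, hg2θ]
    · have := phi2_gt hμ1 hμ2 (lt_of_lt_of_le hp0 (hu_mem k).1)
        (by rw [← hθ]; exact hlt)
      exact this.le
  have hv_anti : Antitone v := by
    apply antitone_nat_of_succ_le
    intro k
    rw [hv_succ]
    rcases eq_or_lt_of_le (hvθ k) with he | hlt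
    · rw [← he, hg2θ]
    · have := phi2_lt hμ1 hμ2 (x := v k) (by rw [← hθ]; exact hlt)
      exact this.le
  -- limits
  have hubdd : BddAbove (Set.range u) := ⟨θ, by rintro x ⟨k, rfl⟩; exact huθ k⟩
  have hvbdd : BddBelow (Set.range v) := ⟨θ, by rintro x ⟨k, rfl⟩; exact hvθ k⟩
  have htenu : Filter.Tendsto u Filter.atTop (nhds (⨆ k, u k)) :=
    tendsto_atTop_ciSup hu_mono hubdd
  have htenv : Filter.Tendsto v Filter.atTop (nhds (⨅ k, v k)) :=
    tendsto_atTop_ciInf hv_anti hvbdd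
  set L := ⨆ k, u k with hL
  set M := ⨅ k, v k with hM
  have hLθ : L = θ := by
    have hshift : Filter.Tendsto (fun k => u (k + 1)) Filter.atTop (nhds L) :=
      htenu.comp (Filter.tendsto_add_atTop_nat 1)
    have heq : (fun k => u (k + 1)) = fun k => g2 (u k) := funext hu_succ
    rw [heq] at hshift
    have hcomp : Filter.Tendsto (fun k => g2 (u k)) Filter.atTop (nhds (g2 L)) :=
      (hg2cont.tendsto L).comp htenu
    have hfix : g2 L = L := tendsto_nhds_unique hcomp hshift
    have hLp : p ≤ L := by
      rw [← hu0]
      exact le_ciSup hubdd 0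
    have := no_two_cycle hμ1 hμ2 (lt_of_lt_of_le hp0 hLp) hfix
    rw [← hθ] at this
    exact this
  have hMθ : M = θ := by
    have hshift : Filter.Tendsto (fun k => v (k + 1)) Filter.atTop (nhds M) :=
      htenv.comp (Filter.tendsto_add_atTop_nat 1)
    have heq : (fun k => v (k + 1)) = fun k => g2 (v k) := funext hv_succ
    rw [heq] at hshift
    have hcomp : Filter.Tendsto (fun k => g2 (v k)) Filter.atTop (nhds (g2 M)) :=
      (hg2cont.tendsto M).comp htenv
    have hfix : g2 M = M := tendsto_nhds_unique hcomp hshift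
    have hMp : θ ≤ M := le_ciInf (fun k => hvθ k)
    have := no_two_cycle hμ1 hμ2 (lt_of_lt_of_le hθp hMp) hfix
    rw [← hθ] at this
    exact this
  rw [hLθ] at htenu
  rw [hMθ] at htenv
  -- eventual confinement in [u k, v k]
  have hEvk : ∀ k, Ev Ξ (u k) (v k) := by
    intro k
    induction k with
    | zero => exact hEv
    | succ k IH =>
      have hA := hu_mem k
      have hB := hv_mem k
      have hAB : u k ≤ v k := le_trans (huθ k) (hvθ k)
      have hphiA := hinv (u k) hA.1 hA.2
      have hphiB := hinv (v k) hB.1 hB.2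
      set m₁ := min (phi μ (u k)) (phi μ (v k)) with hm₁
      set M₁ := max (phi μ (u k)) (phi μ (v k)) with hM₁
      have hm₁mem : p ≤ m₁ ∧ m₁ ≤ q :=
        ⟨le_min hphiA.1 hphiB.1, le_trans (min_le_left _ _) hphiA.2⟩
      have hM₁mem : p ≤ M₁ ∧ M₁ ≤ q :=
        ⟨le_trans hphiA.1 (le_max_left _ _), max_le hphiA.2 hphiB.2⟩
      have hstep1 : Ev Ξ m₁ M₁ := by
        apply Ev_step hΞ IH
        intro w h1 h2
        have hw : w ∈ Set.Icc p q := ⟨le_trans hA.1 h1, le_trans h2 hB.2⟩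
        rcases hmono with hMo | hAn
        · constructor
          · exact le_trans (min_le_left _ _) (hMo ⟨hA.1, hA.2⟩ hw h1)
          · exact le_trans (hMo hw ⟨hB.1, hB.2⟩ h2) (le_max_right _ _)
        · constructor
          · exact le_trans (min_le_right _ _) (hAn hw ⟨hB.1, hB.2⟩ h2)
          · exact le_trans (hAn ⟨hA.1, hA.2⟩ hw h1) (le_max_left _ _)
      rw [hu_succ, hv_succ]
      apply Ev_step hΞ hstep1
      intro w h1 h2
      have hw : w ∈ Set.Icc p q := ⟨le_trans hm₁mem.1 h1, le_trans h2 hM₁mem.2⟩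
      simp only [hg2]
      rcases hmono with hMo | hAn
      · have hord : phi μ (u k) ≤ phi μ (v k) := hMo ⟨hA.1, hA.2⟩ ⟨hB.1, hB.2⟩ hAB
        have hm₁eq : m₁ = phi μ (u k) := min_eq_left hord
        have hM₁eq : M₁ = phi μ (v k) := max_eq_right hord
        constructor
        · rw [← hm₁eq]
          exact hMo ⟨hm₁mem.1, hm₁mem.2⟩ hw h1
        · rw [← hM₁eq]
          exact hMo hw ⟨hM₁mem.1, hM₁mem.2⟩ h2
      · have hord : phi μ (v k) ≤ phi μ (u k) := hAn ⟨hA.1, hA.2⟩ ⟨hB.1, hB.2⟩ hAB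
        have hm₁eq : m₁ = phi μ (v k) := min_eq_right hord
        have hM₁eq : M₁ = phi μ (u k) := max_eq_left hord
        constructor
        · rw [← hM₁eq]
          exact hAn hw ⟨hM₁mem.1, hM₁mem.2⟩ h2
        · rw [← hm₁eq]
          exact hAn ⟨hm₁mem.1, hm₁mem.2⟩ hw h1
  -- conclude
  rw [Metric.tendsto_atTop]
  intro ε hε
  obtain ⟨k₁, hk₁⟩ := (Metric.tendsto_atTop.1 htenu) ε hε
  obtain ⟨k₂, hk₂⟩ := (Metric.tendsto_atTop.1 htenv) ε hε
  set k := max k₁ k₂ with hk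
  have h1 : θ - ε < u k := by
    have := hk₁ k₁ (le_refl _)
    rw [Real.dist_eq, abs_lt] at this
    have h2 : u k₁ ≤ u k := hu_mono (le_max_left _ _)
    linarith
  have h2 : v k < θ + ε := by
    have := hk₂ k₂ (le_refl _)
    rw [Real.dist_eq, abs_lt] at this
    have h3 : v k ≤ v k₂ := hv_anti (le_max_right _ _)
    linarith
  obtain ⟨N, hN⟩ := hEvk k z
  refine ⟨N, ?_⟩
  intro n hn
  have := hN n hn
  rw [Real.dist_eq, abs_lt]
  constructor <;> linarith [this.1, this.2]

end Dynamics

/-- Convergence of the coupled map lattice: for `μ ∈ (1,e²)`, if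
`Ξ_{n+1}(x) = φ_μ(δ_R(x;Ξ_n))` with `Ξ₀ ∈ [0,1/e]^{ℤ^d}` and `Ξ₀(0) > 0`, then for
every `z ∈ ℤ^d`, `Ξ_n(z) → θ_μ = ln(μ)/μ` as `n → ∞`. -/
theorem stmt19 (d R : ℕ) (hd : 1 ≤ d) (hR : 1 ≤ R)
    (μ : ℝ) (hμ1 : 1 < μ) (hμ2 : μ < Real.exp 2)
    (Ξ : ℕ → (Fin d → ℤ) → ℝ)
    (hΞ0 : ∀ x, Ξ 0 x ∈ Set.Icc (0 : ℝ) (Real.exp 1)⁻¹)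
    (hpos : 0 < Ξ 0 (fun _ => 0))
    (hΞ : ∀ n x, Ξ (n + 1) x = phi μ (dens d R (Ξ n) x)) :
    ∀ z : Fin d → ℤ,
      Filter.Tendsto (fun n => Ξ n z) Filter.atTop (nhds (Real.log μ / μ)) := by
  intro z
  have hμ0 : (0:ℝ) < μ := by linarith
  have hXb := Xi_bounds hμ1 hΞ0 hΞ
  obtain ⟨α, hα0, hαb, hαEv⟩ := StepA hR hμ1 hΞ0 hpos hΞ
  have hαθ : α ≤ Real.log μ / μ := le_trans hαb bconst_le_theta
  have hθe : Real.log μ / μ ≤ (Real.exp 1)⁻¹ := theta_le hμ1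
  have hEv0 : Ev Ξ α (Real.exp 1)⁻¹ := by
    intro z'
    obtain ⟨N, hN⟩ := hαEv z'
    exact ⟨N, fun n hn => ⟨hN n hn, (hXb n z').2⟩⟩
  rcases le_or_gt μ (Real.exp 1) with hcase | hcase
  · -- μ ≤ e : phi is monotone on [0, 1/e]
    have hsub : Set.Icc α (Real.exp 1)⁻¹ ⊆ Set.Icc 0 μ⁻¹ := by
      intro w hw
      exact ⟨by linarith [hw.1], le_trans hw.2 (inv_anti₀ hμ0 hcase)⟩
    apply Ev_trap hμ1 hμ2 hΞ hα0 (le_trans hαθ hθe)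
      (Or.inl ((phi_monoOn hμ1).mono hsub)) ?_ hEv0 z
    intro w h1 h2
    refine ⟨?_, phi_le μ w⟩
    have hαmem : α ∈ Set.Icc (0:ℝ) μ⁻¹ := hsub ⟨le_refl α, le_trans hαθ hθe⟩
    have hwmem : w ∈ Set.Icc (0:ℝ) μ⁻¹ := hsub ⟨h1, h2⟩
    have h3 : phi μ α ≤ phi μ w := (phi_monoOn hμ1) hαmem hwmem h1
    have h4 : α ≤ phi μ α := by
      rcases eq_or_lt_of_le hαθ with he | hlt
      · rw [he, phi_theta hμ1]
      · exact (phi_gt_self hμ1 hα0 hlt).le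
    linarith
  · -- e < μ : antitone trap [phi(1/e), 1/e]
    set p := phi μ (Real.exp 1)⁻¹ with hp
    have hpe : μ⁻¹ < p := phi_inv_e_gt hcase hμ2
    have hp0 : 0 < p := by rw [hp]; exact phi_pos hμ0 (by positivity)
    have hpq : p ≤ (Real.exp 1)⁻¹ := phi_le μ _
    have hsub : Set.Icc p (Real.exp 1)⁻¹ ⊆ Set.Ici μ⁻¹ := fun w hw =>
      le_trans hpe.le hw.1
    have hanti := (phi_antiOn hμ1).mono hsub
    have hinv : ∀ w, p ≤ w → w ≤ (Real.exp 1)⁻¹ →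
        p ≤ phi μ w ∧ phi μ w ≤ (Real.exp 1)⁻¹ := by
      intro w h1 h2
      refine ⟨?_, phi_le μ w⟩
      rw [hp]
      exact hanti ⟨h1, h2⟩ ⟨hpq, le_refl _⟩ h2
    have hslope : (1:ℝ) < μ * Real.exp (-1) := by
      have h := mul_lt_mul_of_pos_right hcase (inv_pos.2 (Real.exp_pos 1))
      rw [mul_inv_cancel₀ (ne_of_gt (Real.exp_pos 1))] at h
      rw [Real.exp_neg]
      exact h
    have hslope0 : (0:ℝ) < μ * Real.exp (-1) := by positivity
    have hclimb : ∀ j : ℕ,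
        Ev Ξ (min ((μ * Real.exp (-1))^j * α) p) (Real.exp 1)⁻¹ := by
      intro j
      induction j with
      | zero =>
        apply Ev_weaken _ (le_refl _) hEv0
        rw [pow_zero, one_mul]
        exact min_le_left α p
      | succ j IH =>
        apply Ev_step hΞ IH
        intro w h1 h2
        refine ⟨?_, phi_le μ w⟩
        set Mj := min ((μ * Real.exp (-1))^j * α) p with hMj
        have hMj0 : 0 < Mj := lt_min (by positivity) hp0
        have hend := phi_min_endpoints hμ1 (u := Mj) (v := (Real.exp 1)⁻¹)
          hMj0.le h1 h2
        have hkey : min ((μ * Real.exp (-1))^(j+1) * α) p ≤ phi μ Mj := by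
          rcases le_or_gt Mj μ⁻¹ with hcc | hcc
          · have hμMj : μ * Mj ≤ 1 := by
              have := mul_le_mul_of_nonneg_left hcc hμ0.le
              rwa [mul_inv_cancel₀ (ne_of_gt hμ0)] at this
            have h3 : μ * Real.exp (-1) * Mj ≤ phi μ Mj :=
              phi_ge_slope hμ1 hMj0.le hμMj
            have h5 : μ * Real.exp (-1) * Mj
                = min ((μ * Real.exp (-1))^(j+1) * α) ((μ * Real.exp (-1)) * p) := by
              rw [hMj, mul_min_of_nonneg _ _ hslope0.le]
              congr 1
              rw [pow_succ]
              ring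
            have h4 : min ((μ * Real.exp (-1))^(j+1) * α) p ≤ μ * Real.exp (-1) * Mj := by
              rw [h5]
              apply min_le_min (le_refl _)
              nlinarith
            linarith
          · have h3 : phi μ (Real.exp 1)⁻¹ ≤ phi μ Mj := by
              apply (phi_antiOn hμ1) (Set.mem_Ici.2 hcc.le)
                (Set.mem_Ici.2 (le_trans hcc.le (le_trans (min_le_right _ _) hpq)))
              exact le_trans (min_le_right _ _) hpq
            calc min ((μ * Real.exp (-1))^(j+1) * α) p ≤ p := min_le_right _ _
              _ = phi μ (Real.exp 1)⁻¹ := hp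
              _ ≤ phi μ Mj := h3
        refine le_trans (le_min hkey ?_) hend
        calc min ((μ * Real.exp (-1))^(j+1) * α) p ≤ p := min_le_right _ _
          _ = phi μ (Real.exp 1)⁻¹ := hp
    obtain ⟨j₀, hj₀⟩ := pow_unbounded_of_one_lt (p / α) hslope
    have hfin : p ≤ (μ * Real.exp (-1))^j₀ * α := by
      rw [div_lt_iff₀ hα0] at hj₀
      linarith
    have hEvp : Ev Ξ p (Real.exp 1)⁻¹ := by
      have h := hclimb j₀
      rwa [min_eq_right hfin] at h
    exact Ev_trap hμ1 hμ2 hΞ hp0 hpq (Or.inr hanti) hinv hEvp z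
end
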